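/- arXiv:1706.02383 — 7 statements merged into one kernel-verified Lean document; each statement's English description precedes it below -/
import Mathlib

section
/- If R is a ring whose prime radical J is nilpotent and R/J is a semiprime right Goldie ring, then every nil one-sided ideal of R is nilpotent. -/
/-- A subset `S` of a ring is nilpotent (of some exponent `n > 0`) if all products of
`n` elements of `S` vanish. -/
def SetNilpotent {A : Type} [Ring A] (S : Set A) : Prop :=
  ∃ n : ℕ, 0 < n ∧ ∀ l : List A, l.length = n → (∀ x ∈ l, x ∈ S) → l.prod = 0
/-- A one-sided (right or left) ideal of `A`: an additive subgroup closed under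
multiplication by ring elements on (at least) one side. -/
def IsOneSidedIdeal {A : Type} [Ring A] (S : AddSubgroup A) : Prop :=
  (∀ a ∈ S, ∀ r : A, a * r ∈ S) ∨ (∀ a ∈ S, ∀ r : A, r * a ∈ S)
/-- A two-sided ideal `P` of a (possibly noncommutative) ring is prime if it is proper and
`aRb ⊆ P` implies `a ∈ P` or `b ∈ P`. -/
def IsPrimeTI {A : Type} [Ring A] (P : TwoSidedIdeal A) : Prop :=
  P ≠ ⊤ ∧ ∀ a b : A, (∀ r : A, a * r * b ∈ P) → a ∈ P ∨ b ∈ P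

/-- The prime radical (lower nilradical): the intersection of all prime two-sided ideals. -/
def primeRadical (A : Type) [Ring A] : TwoSidedIdeal A :=
  sInf {P : TwoSidedIdeal A | IsPrimeTI P}
/-- The right annihilator of a subset `X` of `A`, viewed as a left ideal of `Aᵐᵒᵖ`
(i.e. a right ideal of `A`). -/
def rightAnn (A : Type) [Ring A] (X : Set A) : Ideal Aᵐᵒᵖ where
  carrier := {a | ∀ x ∈ X, x * a.unop = 0}
  add_mem' := by
    intro a b ha hb x hx
    simp only [MulOpposite.unop_add, mul_add, ha x hx, hb x hx, add_zero]
  zero_mem' := by intro x hx; simp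
  smul_mem' := by
    intro c a ha x hx
    simp only [smul_eq_mul, MulOpposite.unop_mul, ← mul_assoc, ha x hx, zero_mul]

/-- A ring `A` is right Goldie if it has finite right uniform dimension (no infinite
independent family of nonzero right ideals) and the ascending chain condition on
right annihilators. -/
def IsRightGoldie (A : Type) [Ring A] : Prop :=
  (¬ ∃ f : ℕ → Ideal Aᵐᵒᵖ, (∀ n, f n ≠ ⊥) ∧ iSupIndep f) ∧
  ∀ f : ℕ →o Ideal Aᵐᵒᵖ, (∀ n, ∃ X : Set A, f n = rightAnn A X) →
    ∃ N : ℕ, ∀ m : ℕ, N ≤ m → f m = f N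

/-!
Modulo `J`, a nil one-sided ideal becomes a nil left ideal (for a right ideal, use that
`a * x` nilpotent implies `x * a` nilpotent). In the semiprime ring `R/J`, which has ACC on
right annihilators, such a left ideal `L` vanishes: choose `a ∈ L \ {0}` whose right annihilator
is maximal among those of nonzero elements of `L`. For `c = x * a ≠ 0` of nilpotency class `k`,
maximality gives `ann_r(c ^ (k - 1)) = ann_r(a)`, and `c ∈ ann_r(c ^ (k - 1))`, so
`a * x * a = 0`. Then the ideal generated by `a` squares to zero, contradicting semiprimeness.
Hence `S ⊆ J`, and `S` is nilpotent because `J` is.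
-/

def IsSemiprimeRing (A : Type) [Ring A] : Prop :=
  ∀ I : TwoSidedIdeal A, SetNilpotent (I : Set A) → I = ⊥

def RightAnnihilatorACC (A : Type) [Ring A] : Prop :=
  ∀ f : ℕ →o Ideal Aᵐᵒᵖ, (∀ n, ∃ X : Set A, f n = rightAnn A X) →
    ∃ N : ℕ, ∀ m : ℕ, N ≤ m → f m = f N

section

variable {A : Type} [Ring A]

theorem SetNilpotent.mono {S T : Set A} (hST : S ⊆ T) (hT : SetNilpotent T) :
    SetNilpotent S :=
  let ⟨n, hn, hprod⟩ := hT
  ⟨n, hn, fun l hl hS => hprod l hl fun x hx => hST (hS x hx)⟩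

theorem setNilpotent_of_mul_eq_zero {S : Set A} (hS : ∀ u ∈ S, ∀ v ∈ S, u * v = 0) :
    SetNilpotent S := by
  refine ⟨2, two_pos, fun l hl hmem => ?_⟩
  match l, hl with
  | [u, v], _ => simpa using hS u (hmem u (by simp)) v (hmem v (by simp))

theorem isNilpotent_mul_comm {a b : A} (h : IsNilpotent (a * b)) : IsNilpotent (b * a) := by
  obtain ⟨n, hn⟩ := h
  refine ⟨n + 1, ?_⟩
  rw [pow_succ', mul_assoc, ← mul_pow_mul, hn, zero_mul, mul_zero]

theorem IsOneSidedIdeal.isNilpotent_mul_left {S : AddSubgroup A} (hS : IsOneSidedIdeal S)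
    (hnil : ∀ a ∈ S, IsNilpotent a) {a : A} (ha : a ∈ S) (x : A) : IsNilpotent (x * a) := by
  rcases hS with hright | hleft
  · exact isNilpotent_mul_comm (hnil _ (hright a ha x))
  · exact hnil _ (hleft a ha x)

theorem mem_rightAnn_singleton {c : A} {u : Aᵐᵒᵖ} : u ∈ rightAnn A {c} ↔ c * u.unop = 0 := by
  simp [rightAnn]

theorem rightAnn_singleton_le_mul_left (a x : A) : rightAnn A {a} ≤ rightAnn A {x * a} := by
  intro u hu
  rw [mem_rightAnn_singleton] at hu ⊢
  rw [mul_assoc, hu, mul_zero]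

theorem RightAnnihilatorACC.exists_maximal_rightAnn_singleton (hacc : RightAnnihilatorACC A)
    {C : Set A} (hC : C.Nonempty) : ∃ c ∈ C, ∀ d ∈ C, ¬ rightAnn A {c} < rightAnn A {d} := by
  let Ann := {I : Ideal Aᵐᵒᵖ // ∃ X : Set A, I = rightAnn A X}
  have : WellFoundedGT Ann := by
    refine wellFoundedGT_iff_monotone_chain_condition.2 fun f => ?_
    obtain ⟨N, hN⟩ := hacc ((OrderHom.Subtype.val _).comp f) fun n => (f n).2
    exact ⟨N, fun m hm => Subtype.ext (hN m hm).symm⟩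
  let toAnn (c : A) : Ann := ⟨rightAnn A {c}, {c}, rfl⟩
  obtain ⟨c, hc, hmax⟩ := (InvImage.wf toAnn wellFounded_gt).has_min C hC
  exact ⟨c, hc, fun d hd => hmax d hd⟩

theorem eq_zero_of_forall_mul_mul_eq_zero (hA : IsSemiprimeRing A) {a : A}
    (h : ∀ x, a * x * a = 0) : a = 0 := by
  have hann : ∀ v ∈ TwoSidedIdeal.span {a}, ∀ r, a * r * v = 0 := by
    intro v hv
    induction hv using TwoSidedIdeal.span_induction with
    | mem v hv => rw [Set.mem_singleton_iff.1 hv]; exact h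
    | zero => simp
    | add v w _ _ hv hw => simp [mul_add, hv, hw]
    | neg v _ hv => simp [hv]
    | left_absorb b v _ hv => intro r; rw [← mul_assoc, mul_assoc a, hv]
    | right_absorb b v _ hv => intro r; rw [← mul_assoc, hv, zero_mul]
  have hsq : ∀ u ∈ TwoSidedIdeal.span {a}, ∀ v ∈ TwoSidedIdeal.span {a}, u * v = 0 := by
    intro u hu
    induction hu using TwoSidedIdeal.span_induction with
    | mem u hu => rw [Set.mem_singleton_iff.1 hu]; intro v hv; simpa using hann v hv 1
    | zero => simp
    | add u w _ _ hu hw => intro v hv; rw [add_mul, hu v hv, hw v hv, add_zero]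
    | neg u _ hu => intro v hv; rw [neg_mul, hu v hv, neg_zero]
    | left_absorb b u _ hu => intro v hv; rw [mul_assoc, hu v hv, mul_zero]
    | right_absorb b u _ hu =>
      intro v hv; rw [mul_assoc, hu _ (TwoSidedIdeal.mul_mem_left _ _ _ hv)]
  have hbot := hA _ (setNilpotent_of_mul_eq_zero hsq)
  simpa [hbot] using TwoSidedIdeal.subset_span (Set.mem_singleton a)

theorem mul_mul_eq_zero_of_rightAnn_eq {a : A} (hnil : ∀ x, IsNilpotent (x * a))
    (hann : ∀ x, x * a ≠ 0 → rightAnn A {x * a} = rightAnn A {a}) (x : A) :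
    a * x * a = 0 := by
  by_cases hc : x * a = 0
  · rw [mul_assoc, hc, mul_zero]
  set c := x * a
  have : Nontrivial A := ⟨⟨c, 0, hc⟩⟩
  set k := nilpotencyClass c
  have hk : 2 ≤ k := by
    have hk₀ : 0 < k := pos_nilpotencyClass_iff.2 (hnil x)
    have hk₁ : k ≠ 1 := fun h => hc (nilpotencyClass_eq_one.1 h)
    omega
  have hpow : c ^ (k - 1) = (c ^ (k - 2) * x) * a := by
    rw [mul_assoc, ← pow_succ, show k - 2 + 1 = k - 1 by omega]
  have hmem : MulOpposite.op c ∈ rightAnn A {c ^ (k - 1)} := by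
    rw [mem_rightAnn_singleton, MulOpposite.unop_op, ← pow_succ,
      show k - 1 + 1 = k by omega, pow_nilpotencyClass (hnil x)]
  rw [hpow, hann _ (hpow ▸ pow_pred_nilpotencyClass (hnil x)), mem_rightAnn_singleton] at hmem
  simpa [c, mul_assoc] using hmem

theorem eq_zero_of_forall_isNilpotent_mul_left (hA : IsSemiprimeRing A)
    (hacc : RightAnnihilatorACC A) {a₀ : A} (hnil : ∀ x, IsNilpotent (x * a₀)) : a₀ = 0 := by
  by_contra ha₀
  obtain ⟨a, ⟨ha, y, rfl⟩, hmax⟩ := hacc.exists_maximal_rightAnn_singleton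
    (C := {c | c ≠ 0 ∧ ∃ y, c = y * a₀}) ⟨a₀, ha₀, 1, (one_mul a₀).symm⟩
  refine ha (eq_zero_of_forall_mul_mul_eq_zero hA (mul_mul_eq_zero_of_rightAnn_eq ?_ ?_))
  · intro x
    simpa [mul_assoc] using hnil (x * y)
  · intro x hx
    refine ((rightAnn_singleton_le_mul_left _ x).lt_or_eq.resolve_left ?_).symm
    exact hmax _ ⟨hx, x * y, by rw [mul_assoc]⟩

end

theorem nil_oneSided_ideal_nilpotent_of_primeRadical_nilpotent_goldie_general
    {R : Type} [Ring R] (J : TwoSidedIdeal R)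
    (hJnilp : SetNilpotent (J : Set R))
    (hsemiprime : ∀ I : TwoSidedIdeal J.ringCon.Quotient,
      SetNilpotent (I : Set J.ringCon.Quotient) → I = ⊥)
    (hgoldie : IsRightGoldie J.ringCon.Quotient)
    (S : AddSubgroup R) (hS : IsOneSidedIdeal S)
    (hnil : ∀ a ∈ S, IsNilpotent a) :
    SetNilpotent (S : Set R) := by
  let π : R →+* J.ringCon.Quotient := J.ringCon.mk'
  have hπ : Function.Surjective π := Quotient.mk''_surjective
  refine hJnilp.mono fun a ha => ?_
  have hπa : π a = 0 := by
    refine eq_zero_of_forall_isNilpotent_mul_left hsemiprime hgoldie.2 fun q => ?_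
    obtain ⟨x, rfl⟩ := hπ q
    simpa using (hS.isNilpotent_mul_left hnil ha x).map π
  rw [SetLike.mem_coe, J.mem_iff]
  exact J.ringCon.eq.mp (hπa.trans (map_zero π).symm)

/-- If the prime radical `J` of `R` is nilpotent and `R/J` is a semiprime right Goldie
ring, then every nil one-sided ideal of `R` is nilpotent. -/
theorem nil_oneSided_ideal_nilpotent_of_primeRadical_nilpotent_goldie
    {R : Type} [Ring R] (J : TwoSidedIdeal R) (hJ : J = primeRadical R)
    (hJnilp : SetNilpotent (J : Set R))
    (hsemiprime : ∀ I : TwoSidedIdeal J.ringCon.Quotient,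
      SetNilpotent (I : Set J.ringCon.Quotient) → I = ⊥)
    (hgoldie : IsRightGoldie J.ringCon.Quotient)
    (S : AddSubgroup R) (hS : IsOneSidedIdeal S)
    (hnil : ∀ a ∈ S, IsNilpotent a) :
    SetNilpotent (S : Set R) :=
  nil_oneSided_ideal_nilpotent_of_primeRadical_nilpotent_goldie_general J hJnilp hsemiprime hgoldie
    S hS hnil
end

section
/- In a right artinian ring, every nil one-sided ideal is nilpotent. -/
open MulOpposite

lemma isNilpotent_swap {R : Type*} [Ring R] {a b : R} (h : IsNilpotent (a * b)) :
    IsNilpotent (b * a) := by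
  obtain ⟨k, hk⟩ := h
  refine ⟨k + 1, ?_⟩
  have key : ∀ n : ℕ, (b * a) ^ (n + 1) = b * (a * b) ^ n * a := by
    intro n
    induction n with
    | zero => simp [pow_succ]
    | succ m ih => rw [pow_succ, ih, pow_succ]; noncomm_ring
  rw [key, hk, mul_zero, zero_mul]

/-- The "quasi-regular" ideal: `x` such that `1 - r*x` is a unit for all `r`. -/
def radLike (R : Type*) [Ring R] : Ideal R where
  carrier := {x | ∀ r : R, IsUnit (1 - r * x)}
  zero_mem' := by intro r; simp
  add_mem' := by
    intro x y hx hy r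
    obtain ⟨v, hv⟩ := hx r
    obtain ⟨w, hw⟩ := hy (↑v⁻¹ * r)
    refine ⟨v * w, ?_⟩
    have hvv : (↑v : R) * ↑v⁻¹ = 1 := v.mul_inv
    calc (↑(v * w) : R) = ↑v * ↑w := rfl
      _ = ↑v * (1 - (↑v⁻¹ * r) * y) := by rw [hw]
      _ = ↑v - (↑v * ↑v⁻¹) * (r * y) := by noncomm_ring
      _ = (1 - r * x) - 1 * (r * y) := by rw [hvv, hv]
      _ = 1 - r * (x + y) := by noncomm_ring
  smul_mem' := by
    intro c x hx r
    have := hx (r * c)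
    simpa [mul_assoc, smul_eq_mul] using this

/-- Core lemma: in a left artinian ring, a nil one-sided ideal is nilpotent. -/
lemma core_nilpotent {R : Type*} [Ring R] (hart : IsArtinianRing R) (S : AddSubgroup R)
    (hS : (∀ a ∈ S, ∀ r : R, a * r ∈ S) ∨ (∀ a ∈ S, ∀ r : R, r * a ∈ S))
    (hnil : ∀ a ∈ S, IsNilpotent a) :
    ∃ n : ℕ, 0 < n ∧ ∀ l : List R, l.length = n → (∀ x ∈ l, x ∈ S) → l.prod = 0 := by
  haveI : IsArtinian R R := hart
  -- every element of S is in radLike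
  have hSrad : ∀ s ∈ S, (s : R) ∈ radLike R := by
    intro s hs r
    have hnp : IsNilpotent (r * s) := by
      rcases hS with h | h
      · exact isNilpotent_swap (hnil _ (h s hs r))
      · exact hnil _ (h s hs r)
    obtain ⟨k, hk⟩ := hnp
    exact (IsNilpotent.isUnit_one_sub ⟨k, hk⟩)
  -- products of length n
  set P : ℕ → Set R := fun n => {x | ∃ l : List R, l.length = n ∧ (∀ y ∈ l, y ∈ S) ∧ l.prod = x}
    with hP
  set f : ℕ → Ideal R := fun n => Ideal.span (P n) with hf
  have hfanti : ∀ n, f (n + 1) ≤ f n := by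
    intro n
    rw [hf]
    apply Ideal.span_le.mpr
    rintro x ⟨l, hl, hlS, rfl⟩
    match l, hl with
    | y :: t, hl =>
      have ht : t.prod ∈ f n := Ideal.subset_span ⟨t, by simpa using hl, fun z hz => hlS z (List.mem_cons_of_mem _ hz), rfl⟩
      simpa [List.prod_cons] using Ideal.mul_mem_left _ y ht
  have hanti : Antitone f := antitone_nat_of_succ_le hfanti
  obtain ⟨n0, hn0⟩ := IsArtinian.monotone_stabilizes
    (⟨fun n => OrderDual.toDual (f n), fun i j hij => hanti hij⟩ : ℕ →o (Ideal R)ᵒᵈ)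
  set n := n0 + 1 with hn
  have hstab : ∀ m, n ≤ m → f m = f n := by
    intro m hm
    exact ((hn0 m (le_trans (Nat.le_succ n0) hm)).symm.trans (hn0 n (Nat.le_succ n0)) : _)
  refine ⟨n, Nat.succ_pos n0, ?_⟩
  suffices hbot : f n = ⊥ by
    intro l hl hlS
    have hm : l.prod ∈ f n := Ideal.subset_span ⟨l, hl, hlS, rfl⟩
    rw [hbot] at hm
    simpa using hm
  by_contra hne
  set K := f n with hK
  have hKrad : K ≤ radLike R := by
    have h1 : f n ≤ f 1 := hanti (by omega)
    refine le_trans h1 (Ideal.span_le.mpr ?_)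
    rintro x ⟨l, hl, hlS, rfl⟩
    match l, hl with
    | [y], _ => simpa using hSrad y (hlS y (by simp))
  have hKKspan : K ≤ Ideal.span {x : R | ∃ k1 ∈ K, ∃ k2 ∈ K, k1 * k2 = x} := by
    have h2n : f (n + n) = K := hstab (n + n) (by omega)
    have hstep : Ideal.span (P (n + n)) ≤
        Ideal.span {x : R | ∃ k1 ∈ K, ∃ k2 ∈ K, k1 * k2 = x} := by
      apply Ideal.span_le.mpr
      rintro x ⟨l, hl, hlS, rfl⟩
      apply Ideal.subset_span
      refine ⟨(l.take n).prod, ?_, (l.drop n).prod, ?_, ?_⟩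
      · exact Ideal.subset_span ⟨l.take n,
          by rw [List.length_take, hl]; exact min_eq_left (Nat.le_add_right n n),
          fun z hz => hlS z (List.mem_of_mem_take hz), rfl⟩
      · exact Ideal.subset_span ⟨l.drop n,
          by rw [List.length_drop, hl]; exact Nat.add_sub_cancel n n,
          fun z hz => hlS z (List.mem_of_mem_drop hz), rfl⟩
      · rw [← List.prod_append, List.take_append_drop]
    calc K = f (n + n) := h2n.symm
      _ ≤ _ := hstep
  set F : Set (Ideal R) := {L | ∃ a ∈ L, ∃ k ∈ K, k * a ≠ 0} with hF
  have hKF : K ∈ F := by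
    by_contra h
    rw [hF, Set.mem_setOf_eq] at h
    push_neg at h
    apply hne
    have h2n : f (n + n) = K := hstab (n + n) (by omega)
    rw [← h2n, eq_bot_iff]
    show Ideal.span (P (n + n)) ≤ ⊥
    apply Ideal.span_le.mpr
    rintro x ⟨l, hl, hlS, rfl⟩
    have h1 : (l.take n).prod ∈ K := Ideal.subset_span ⟨l.take n,
      by rw [List.length_take, hl]; exact min_eq_left (Nat.le_add_right n n), fun z hz => hlS z (List.mem_of_mem_take hz), rfl⟩
    have h2 : (l.drop n).prod ∈ K := Ideal.subset_span ⟨l.drop n,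
      by rw [List.length_drop, hl]; exact Nat.add_sub_cancel n n, fun z hz => hlS z (List.mem_of_mem_drop hz), rfl⟩
    have : l.prod = (l.take n).prod * (l.drop n).prod := by
      rw [← List.prod_append, List.take_append_drop]
    simp only [SetLike.mem_coe, Submodule.mem_bot]
    rw [this, h _ h2 _ h1]
  obtain ⟨L, hLF, hmin⟩ := IsArtinian.set_has_minimal F ⟨K, hKF⟩
  obtain ⟨a, haL, k0, hk0K, hk0⟩ := hLF
  set L' : Ideal R := Submodule.map (LinearMap.toSpanSingleton R R a) K with hL'
  have hL'le : L' ≤ L := by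
    rintro x hx
    obtain ⟨k, hk, rfl⟩ := Submodule.mem_map.mp hx
    simpa [LinearMap.toSpanSingleton_apply, smul_eq_mul] using L.smul_mem k haL
  have hL'F : L' ∈ F := by
    by_contra h
    rw [hF, Set.mem_setOf_eq] at h
    push_neg at h
    apply hk0
    refine Submodule.span_induction (p := fun x _ => x * a = 0) ?_ ?_ ?_ ?_ (hKKspan hk0K)
    · rintro x ⟨k1, hk1, k2, hk2, rfl⟩
      show k1 * k2 * a = 0
      have hmem : k2 * a ∈ L' := Submodule.mem_map.mpr ⟨k2, hk2,
        by simp [LinearMap.toSpanSingleton_apply, smul_eq_mul]⟩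
      rw [mul_assoc]
      exact h (k2 * a) hmem k1 hk1
    · show (0 : R) * a = 0
      rw [zero_mul]
    · intro x y _ _ hx hy
      show (x + y) * a = 0
      rw [add_mul, hx, hy, add_zero]
    · intro r x _ hx
      show (r • x) * a = 0
      rw [smul_eq_mul, mul_assoc, hx, mul_zero]
  have hLL' : L' = L := by
    by_contra hne'
    exact hmin L' hL'F (lt_of_le_of_ne hL'le hne')
  have haL' : a ∈ L' := hLL' ▸ haL
  obtain ⟨k, hkK, hka⟩ := Submodule.mem_map.mp haL'
  have hka' : k * a = a := by
    simpa [LinearMap.toSpanSingleton_apply, smul_eq_mul] using hka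
  have hkrad : ∀ r : R, IsUnit (1 - r * k) := hKrad hkK
  obtain ⟨u, hu⟩ := hkrad 1
  have hu' : (↑u : R) = 1 - k := by rw [hu, one_mul]
  have ha0 : a = 0 := by
    have h1 : (1 - k) * a = 0 := by rw [sub_mul, one_mul, hka', sub_self]
    calc a = (↑u⁻¹ * ↑u) * a := by rw [u.inv_mul, one_mul]
      _ = ↑u⁻¹ * ((1 - k) * a) := by rw [mul_assoc, hu']
      _ = 0 := by rw [h1, mul_zero]
  exact hk0 (by rw [ha0, mul_zero])

/-- In a right artinian ring, every nil one-sided ideal is nilpotent. -/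
theorem nil_oneSided_ideal_nilpotent_of_rightArtinian {A : Type} [Ring A]
    (hart : IsArtinianRing Aᵐᵒᵖ) (S : AddSubgroup A) (hS : IsOneSidedIdeal S)
    (hnil : ∀ a ∈ S, IsNilpotent a) :
    SetNilpotent (S : Set A) := by
  set S' : AddSubgroup Aᵐᵒᵖ := S.comap (opAddEquiv (α := A)).symm.toAddMonoidHom with hS'def
  have hmem : ∀ x : Aᵐᵒᵖ, x ∈ S' ↔ x.unop ∈ S := fun x => Iff.rfl
  have hS' : (∀ a ∈ S', ∀ r : Aᵐᵒᵖ, a * r ∈ S') ∨ (∀ a ∈ S', ∀ r : Aᵐᵒᵖ, r * a ∈ S') := by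
    rcases hS with h | h
    · right; intro a ha r
      rw [hmem]
      simpa using h a.unop ((hmem a).mp ha) r.unop
    · left; intro a ha r
      rw [hmem]
      simpa using h a.unop ((hmem a).mp ha) r.unop
  have hnil' : ∀ a ∈ S', IsNilpotent a := by
    intro a ha
    obtain ⟨k, hk⟩ := hnil a.unop ((hmem a).mp ha)
    exact ⟨k, by rw [← unop_inj]; simpa using hk⟩
  obtain ⟨n, hn, hl⟩ := core_nilpotent hart S' hS' hnil'
  refine ⟨n, hn, ?_⟩
  intro l hlen hlS
  have hmain := hl ((l.map op).reverse) (by simp [hlen]) ?_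
  · have hprod : op l.prod = ((l.map op).reverse).prod := MulOpposite.op_list_prod l
    rw [← op_inj, hprod, hmain]
    simp
  · intro x hx
    rw [List.mem_reverse, List.mem_map] at hx
    obtain ⟨y, hy, rfl⟩ := hx
    rw [hmem]
    simpa using hlS y hy
end

section
/- (Levitzki) In a right noetherian ring, every nil one-sided ideal is nilpotent. -/
namespace LevitzkiAux

variable {A : Type} [Ring A]

lemma pow_shift (a b : A) (k : ℕ) : (a * b) ^ (k + 1) = a * ((b * a) ^ k * b) := by
  induction k with
  | zero => simp
  | succ k ih => rw [pow_succ, ih]; simp [pow_succ, mul_assoc]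

/-- Two-sided additive subgroup. -/
def IsTwoSided (N : AddSubgroup A) : Prop :=
  ∀ a ∈ N, ∀ r : A, a * r ∈ N ∧ r * a ∈ N

/-- The additive subgroup of `A` corresponding to a right ideal of `A`,
presented as an ideal of `Aᵐᵒᵖ`. -/
def unopSub (I : Ideal Aᵐᵒᵖ) : AddSubgroup A where
  carrier := {x | MulOpposite.op x ∈ I}
  add_mem' := fun hx hy => by simpa using I.add_mem hx hy
  zero_mem' := by simp
  neg_mem' := fun hx => by simpa using I.neg_mem hx

lemma mem_unopSub {I : Ideal Aᵐᵒᵖ} {x : A} : x ∈ unopSub I ↔ MulOpposite.op x ∈ I :=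
  Iff.rfl

/-- A right-absorbing additive subgroup of `A` gives an ideal of `Aᵐᵒᵖ`. -/
def opIdeal (N : AddSubgroup A) (hN : ∀ a ∈ N, ∀ r : A, a * r ∈ N) : Ideal Aᵐᵒᵖ where
  carrier := {x | x.unop ∈ N}
  add_mem' := fun hx hy => N.add_mem hx hy
  zero_mem' := N.zero_mem
  smul_mem' := fun c x hx => by
    simpa [MulOpposite.unop_mul] using hN x.unop hx c.unop

lemma wf_opIdeals (hnoeth : IsNoetherianRing Aᵐᵒᵖ) :
    WellFounded ((· > ·) : Ideal Aᵐᵒᵖ → Ideal Aᵐᵒᵖ → Prop) :=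
  isNoetherian_iff.mp hnoeth

/-- There is a maximal SetNilpotent two-sided additive subgroup. -/
lemma exists_max (hnoeth : IsNoetherianRing Aᵐᵒᵖ) :
    ∃ N : AddSubgroup A, IsTwoSided N ∧ SetNilpotent (N : Set A) ∧
      ∀ J : AddSubgroup A, IsTwoSided J → SetNilpotent (J : Set A) → ¬ N < J := by
  classical
  set SS : Set (Ideal Aᵐᵒᵖ) :=
    {I | IsTwoSided (unopSub I) ∧ SetNilpotent ((unopSub I : AddSubgroup A) : Set A)} with hSS
  have hne : SS.Nonempty := by
    refine ⟨⊥, ?_, ?_⟩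
    · intro a ha r
      have : a = 0 := by simpa [unopSub, mem_unopSub] using ha
      subst this
      constructor <;> simp [mem_unopSub, unopSub]
    · refine ⟨1, one_pos, ?_⟩
      intro l hl hmem
      match l, hl with
      | [x], _ =>
        have hx : x ∈ unopSub (⊥ : Ideal Aᵐᵒᵖ) := hmem x (by simp)
        have : x = 0 := by simpa [unopSub, mem_unopSub] using hx
        simp [this]
  obtain ⟨I₀, hI₀, hmin⟩ := (wf_opIdeals hnoeth).has_min SS hne
  refine ⟨unopSub I₀, hI₀.1, hI₀.2, ?_⟩
  intro J hJ2 hJnil hlt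
  have hJr : ∀ a ∈ J, ∀ r : A, a * r ∈ J := fun a ha r => (hJ2 a ha r).1
  set IJ : Ideal Aᵐᵒᵖ := opIdeal J hJr with hIJ
  have hJeq : unopSub IJ = J := by
    ext x; rfl
  have hIJSS : IJ ∈ SS := by
    rw [hSS, Set.mem_setOf_eq, hJeq]; exact ⟨hJ2, hJnil⟩
  refine hmin IJ hIJSS ?_
  rcases SetLike.lt_iff_le_and_exists.mp hlt with ⟨hle, b, hbJ, hbN⟩
  refine lt_of_le_of_ne (fun x hx => hle hx) (fun heq => hbN ?_)
  have h2 : unopSub I₀ = unopSub IJ := congrArg _ heq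
  rw [h2, hJeq]
  exact hbJ

/-- Pair up a list of `2*n` elements of `J` into `n` elements whose pairwise
products lie in `N`, preserving the product. -/
lemma pair_prod (N J : Set A) (hJJ : ∀ x ∈ J, ∀ y ∈ J, x * y ∈ N) :
    ∀ (n : ℕ) (l : List A), l.length = 2 * n → (∀ x ∈ l, x ∈ J) →
      ∃ l' : List A, l'.length = n ∧ (∀ x ∈ l', x ∈ N) ∧ l'.prod = l.prod := by
  intro n
  induction n with
  | zero =>
    intro l hl _
    match l, hl with
    | [], _ => exact ⟨[], rfl, by simp, rfl⟩
  | succ n ih =>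
    intro l hl hmem
    match l with
    | x :: y :: t =>
      have ht : t.length = 2 * n := by simpa [Nat.mul_succ] using hl
      obtain ⟨t', ht'len, ht'mem, ht'prod⟩ := ih t ht
        (fun z hz => hmem z (by simp [hz]))
      refine ⟨(x * y) :: t', by simp [ht'len], ?_, ?_⟩
      · intro z hz
        rcases List.mem_cons.mp hz with rfl | hz
        · exact hJJ x (hmem x (by simp)) y (hmem y (by simp))
        · exact ht'mem z hz
      · simp [List.prod_cons, ht'prod, mul_assoc]

/-- Key lemma (Utumi's argument mod the maximal nilpotent ideal). -/
lemma key (hnoeth : IsNoetherianRing Aᵐᵒᵖ) (N : AddSubgroup A)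
    (hN2 : IsTwoSided N) (hNnil : SetNilpotent (N : Set A))
    (hmax : ∀ J : AddSubgroup A, IsTwoSided J → SetNilpotent (J : Set A) → ¬ N < J)
    (a₀ : A) (hP : ∀ r : A, IsNilpotent (r * a₀)) : a₀ ∈ N := by
  classical
  by_contra ha₀
  -- annihilator mod N, as a right ideal (ideal of Aᵐᵒᵖ)
  set Ann : A → Ideal Aᵐᵒᵖ := fun b =>
    { carrier := {x | b * x.unop ∈ N}
      add_mem' := by
        intro x y hx hy
        simpa [mul_add] using N.add_mem hx hy
      zero_mem' := by simpa using N.zero_mem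
      smul_mem' := by
        intro c x hx
        simpa [MulOpposite.unop_mul, ← mul_assoc] using (hN2 _ hx c.unop).1 } with hAnn
  have mem_Ann : ∀ (b : A) (x : Aᵐᵒᵖ), x ∈ Ann b ↔ b * x.unop ∈ N := fun b x => Iff.rfl
  set T : Set (Ideal Aᵐᵒᵖ) := {I | ∃ c : A, c * a₀ ∉ N ∧ I = Ann (c * a₀)} with hT
  have hTne : T.Nonempty := ⟨Ann (1 * a₀), 1, by simpa using ha₀, rfl⟩
  obtain ⟨I₀, hI₀T, hmin⟩ := (wf_opIdeals hnoeth).has_min T hTne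
  obtain ⟨c₀, hb₀N, rfl⟩ := hI₀T
  set b₀ : A := c₀ * a₀ with hb₀
  -- every r·b₀ is nilpotent mod N
  have hnilb : ∀ r : A, ∃ k : ℕ, (r * b₀) ^ k ∈ N := by
    intro r
    obtain ⟨k, hk⟩ := hP (r * c₀)
    exact ⟨k, by rw [hb₀, ← mul_assoc, hk]; exact N.zero_mem⟩
  -- Claim 1: b₀ * r * b₀ ∈ N for all r
  have claim1 : ∀ r : A, b₀ * r * b₀ ∈ N := by
    intro r
    by_contra hbrb
    set k := Nat.find (hnilb r) with hkdef
    have hk : (r * b₀) ^ k ∈ N := Nat.find_spec (hnilb r)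
    have hkmin : ∀ m < k, (r * b₀) ^ m ∉ N := fun m hm => Nat.find_min (hnilb r) hm
    have hk0 : k ≠ 0 := by
      intro h0
      rw [h0, pow_zero] at hk
      exact hb₀N (by simpa using (hN2 1 hk b₀).2)
    have hk1 : k ≠ 1 := by
      intro h1
      rw [h1, pow_one] at hk
      exact hbrb (by simpa [mul_assoc] using (hN2 _ hk b₀).2)
    have hk2 : 2 ≤ k := by omega
    set b₁ : A := (r * b₀) ^ (k - 1) with hb₁
    have hb₁N : b₁ ∉ N := hkmin (k - 1) (by omega)
    -- b₁ = c₁ * a₀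
    have hb₁eq : b₁ = ((r * b₀) ^ (k - 2) * (r * c₀)) * a₀ := by
      rw [hb₁, show k - 1 = (k - 2) + 1 by omega, pow_succ, hb₀]
      simp [mul_assoc]
    -- Ann b₀ ≤ Ann b₁
    have hle : Ann b₀ ≤ Ann b₁ := by
      intro x hx
      rw [mem_Ann] at hx ⊢
      have h1 : r * (b₀ * x.unop) ∈ N := (hN2 _ hx r).2
      have h2 : (r * b₀) ^ (k - 2) * (r * (b₀ * x.unop)) ∈ N := (hN2 _ h1 _).2
      have : b₁ * x.unop = (r * b₀) ^ (k - 2) * (r * (b₀ * x.unop)) := by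
        rw [hb₁, show k - 1 = (k - 2) + 1 by omega, pow_succ]
        simp [mul_assoc]
      rw [this]; exact h2
    -- strictness: op (r * b₀) separates
    have hsep1 : MulOpposite.op (r * b₀) ∈ Ann b₁ := by
      rw [mem_Ann]
      have : b₁ * (r * b₀) = (r * b₀) ^ k := by
        rw [hb₁, ← pow_succ, show k - 1 + 1 = k by omega]
      simpa [this] using hk
    have hsep2 : MulOpposite.op (r * b₀) ∉ Ann b₀ := by
      rw [mem_Ann]
      simpa [mul_assoc] using hbrb
    have hb₁T : Ann b₁ ∈ T := by
      refine ⟨(r * b₀) ^ (k - 2) * (r * c₀), ?_, ?_⟩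
      · rw [← hb₁eq]; exact hb₁N
      · rw [← hb₁eq]
    exact hmin (Ann b₁) hb₁T (lt_of_le_of_ne hle (fun h => hsep2 (h ▸ hsep1)))
  -- build the two-sided ideal J = N + (b₀)
  set G : Set A := (N : Set A) ∪ {x | ∃ u v : A, x = u * b₀ * v} with hG
  set J : AddSubgroup A := AddSubgroup.closure G with hJ
  have hNJ : N ≤ J := by
    intro x hx
    exact AddSubgroup.subset_closure (Or.inl hx)
  have hb₀J : b₀ ∈ J :=
    AddSubgroup.subset_closure (Or.inr ⟨1, 1, by simp⟩)
  -- J is two-sided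
  have hJ2 : IsTwoSided J := by
    intro a ha r
    constructor
    · refine AddSubgroup.closure_induction ?_ ?_ ?_ ?_ ha
      · rintro x (hx | ⟨u, v, rfl⟩)
        · exact hNJ (hN2 x hx r).1
        · exact AddSubgroup.subset_closure (Or.inr ⟨u, v * r, by simp [mul_assoc]⟩)
      · simpa using J.zero_mem
      · intro x y _ _ hx hy
        simpa [add_mul] using J.add_mem hx hy
      · intro x _ hx
        simpa [neg_mul] using J.neg_mem hx
    · refine AddSubgroup.closure_induction ?_ ?_ ?_ ?_ ha
      · rintro x (hx | ⟨u, v, rfl⟩)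
        · exact hNJ (hN2 x hx r).2
        · exact AddSubgroup.subset_closure (Or.inr ⟨r * u, v, by simp [mul_assoc]⟩)
      · simpa using J.zero_mem
      · intro x y _ _ hx hy
        simpa [mul_add] using J.add_mem hx hy
      · intro x _ hx
        simpa [mul_neg] using J.neg_mem hx
  -- products of two elements of J lie in N
  have claimA : ∀ u v : A, ∀ y ∈ J, (u * b₀ * v) * y ∈ N := by
    intro u v y hy
    refine AddSubgroup.closure_induction ?_ ?_ ?_ ?_ hy
    · rintro x (hx | ⟨u', v', rfl⟩)
      · exact (hN2 x hx _).2
      · have h1 : b₀ * (v * u') * b₀ ∈ N := claim1 (v * u')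
        have h2 : u * (b₀ * (v * u') * b₀) ∈ N := (hN2 _ h1 u).2
        have h3 : (u * (b₀ * (v * u') * b₀)) * v' ∈ N := (hN2 _ h2 v').1
        have : (u * b₀ * v) * (u' * b₀ * v') = (u * (b₀ * (v * u') * b₀)) * v' := by
          simp [mul_assoc]
        rw [this]; exact h3
    · simpa using N.zero_mem
    · intro x y _ _ hx hy
      simpa [mul_add] using N.add_mem hx hy
    · intro x _ hx
      simpa [mul_neg] using N.neg_mem hx
  have hJJ : ∀ x ∈ J, ∀ y ∈ J, x * y ∈ N := by
    intro x hx
    refine AddSubgroup.closure_induction ?_ ?_ ?_ ?_ hx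
    · rintro z (hz | ⟨u, v, rfl⟩) y hy
      · exact (hN2 z hz y).1
      · exact claimA u v y hy
    · intro y _; simpa using N.zero_mem
    · intro x y _ _ hx hy z hz
      simpa [add_mul] using N.add_mem (hx z hz) (hy z hz)
    · intro x _ hx z hz
      simpa [neg_mul] using N.neg_mem (hx z hz)
  -- J is SetNilpotent
  obtain ⟨n, hn, hNpow⟩ := hNnil
  have hJnil : SetNilpotent (J : Set A) := by
    refine ⟨2 * n, by omega, ?_⟩
    intro l hl hmem
    obtain ⟨l', hl'len, hl'mem, hl'prod⟩ :=
      pair_prod (N : Set A) (J : Set A) hJJ n l hl hmem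
    rw [← hl'prod]
    exact hNpow l' hl'len hl'mem
  exact hmax J hJ2 hJnil (lt_of_le_of_ne hNJ (fun h => ha₀ (by
    have : b₀ ∈ N := h ▸ hb₀J
    exact absurd this hb₀N)))

end LevitzkiAux

open LevitzkiAux in
/-- (Levitzki) In a right noetherian ring, every nil one-sided ideal is nilpotent. -/
theorem nil_oneSided_ideal_nilpotent_of_rightNoetherian {A : Type} [Ring A]
    (hnoeth : IsNoetherianRing Aᵐᵒᵖ) (S : AddSubgroup A) (hS : IsOneSidedIdeal S)
    (hnil : ∀ a ∈ S, IsNilpotent a) :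
    SetNilpotent (S : Set A) := by
  obtain ⟨N, hN2, hNnil, hmax⟩ := exists_max hnoeth
  have hsub : ∀ a ∈ S, a ∈ N := by
    intro a ha
    apply key hnoeth N hN2 hNnil hmax
    intro r
    rcases hS with hright | hleft
    · obtain ⟨k, hk⟩ := hnil (a * r) (hright a ha r)
      refine ⟨k + 1, ?_⟩
      rw [pow_shift, hk, zero_mul, mul_zero]
    · exact hnil (r * a) (hleft a ha r)
  obtain ⟨n, hn, hp⟩ := hNnil
  exact ⟨n, hn, fun l hl hmem => hp l hl (fun x hx => hsub x (hmem x hx))⟩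
end

section
/- Let k be a field and R a k-algebra generated by a finite-dimensional subspace V containing 1, and suppose R is algebraic over k. Then the ideal gr R⁺ = ⊕_{i≥1} V^i/V^{i-1} of the associated graded ring gr R = ⊕_{i≥0} V^i/V^{i-1} is graded nil: every homogeneous element of gr R⁺ is nilpotent. -/
/-- A realization of the associated graded ring `gr R = ⊕_{i≥0} V^i/V^{i-1}` of the
filtration of `R` by the powers of the generating subspace `V` (with `V^0 = k`): a ring
`A` together with, for each `i`, a linear map `φ i : V^i → A` which is "reduction modulo
`V^{i-1}` onto the `i`-th homogeneous component", such that `A` is the internal direct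
sum of the images, `φ` sends `1` to `1` and is multiplicative. -/
structure GrRealization (k R A : Type) [Field k] [Ring R] [Algebra k R]
    [Ring A] [Algebra k A] (V : Submodule k R) where
  φ : ∀ i : ℕ, (V ^ i : Submodule k R) →ₗ[k] A
  map_one : φ 0 ⟨1, by rw [pow_zero]; exact Submodule.one_le.mp le_rfl⟩ = 1
  ker_zero : LinearMap.ker (φ 0) = ⊥
  ker_succ : ∀ i : ℕ,
    LinearMap.ker (φ (i + 1)) = (V ^ i).comap (V ^ (i + 1) : Submodule k R).subtype
  map_mul : ∀ (i j : ℕ) (x : (V ^ i : Submodule k R)) (y : (V ^ j : Submodule k R)),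
    φ (i + j) ⟨(x : R) * (y : R), by
      rw [pow_add]; exact Submodule.mul_mem_mul x.2 y.2⟩ = φ i x * φ j y
  indep : iSupIndep fun i : ℕ => LinearMap.range (φ i)
  span_top : (⨆ i : ℕ, LinearMap.range (φ i)) = ⊤

/-- For a finitely generated algebraic algebra `R` over a field `k`, the ideal
`gr R⁺ = ⊕_{i≥1} V^i/V^{i-1}` of the associated graded ring is graded nil: every
homogeneous element of positive degree is nilpotent. -/
theorem grPlus_graded_nil_of_algebraic {k R A : Type} [Field k] [Ring R] [Algebra k R]
    [Ring A] [Algebra k A] (V : Submodule k R) (h1 : (1 : R) ∈ V)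
    [FiniteDimensional k V] (hgen : Algebra.adjoin k (V : Set R) = ⊤)
    [Algebra.IsAlgebraic k R]
    (G : GrRealization k R A V) :
    ∀ i : ℕ, 1 ≤ i → ∀ x : (V ^ i : Submodule k R), IsNilpotent (G.φ i x) := by
  intro i hi x
  -- monotonicity of the filtration
  have hmono : ∀ m n : ℕ, m ≤ n → V ^ m ≤ V ^ n := by
    intro m n hmn
    induction n with
    | zero => simp_all
    | succ n ih =>
      rcases Nat.lt_or_ge m (n+1) with h' | h'
      · refine le_trans (ih (by omega)) ?_
        intro a ha
        rw [pow_succ]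
        simpa using Submodule.mul_mem_mul ha h1
      · have : m = n + 1 := by omega
        subst this; exact le_rfl
  -- φ (m+1) kills V^m
  have hker : ∀ (m : ℕ) (a : (V ^ (m+1) : Submodule k R)), (a : R) ∈ V ^ m →
      G.φ (m+1) a = 0 := by
    intro m a ha
    have : a ∈ LinearMap.ker (G.φ (m+1)) := by rw [G.ker_succ m]; exact ha
    exact this
  -- congruence
  have hcongr : ∀ {m m' : ℕ}, m = m' → ∀ {a a' : R}, a = a' →
      ∀ (ha : a ∈ V ^ m) (ha' : a' ∈ V ^ m'),
      G.φ m ⟨a, ha⟩ = G.φ m' ⟨a', ha'⟩ := by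
    rintro m _ rfl a _ rfl ha ha'; rfl
  have hmem : ∀ n : ℕ, ((x : R)) ^ n ∈ V ^ (i * n) := by
    intro n
    have h := Submodule.pow_mem_pow (V ^ i : Submodule k R) x.2 n
    rwa [← pow_mul] at h
  -- powers
  have hpow : ∀ n : ℕ, (G.φ i x) ^ n = G.φ (i * n) ⟨(x : R) ^ n, hmem n⟩ := by
    intro n
    induction n with
    | zero =>
      rw [pow_zero, hcongr (mul_zero i) (pow_zero ((x : R))) (hmem 0)
        (by rw [pow_zero]; exact Submodule.one_le.mp le_rfl)]
      exact G.map_one.symm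
    | succ n ih =>
      rw [pow_succ, ih, ← G.map_mul (i*n) i ⟨_, hmem n⟩ x]
      exact hcongr (by ring) (pow_succ _ _).symm _ _
  -- minimal polynomial
  have hint : IsIntegral k (x : R) := (Algebra.IsAlgebraic.isAlgebraic (x : R)).isIntegral
  set p := minpoly k (x : R) with hp
  set n := p.natDegree with hn
  rcases subsingleton_or_nontrivial R with hR | hR
  · exact ⟨1, by rw [pow_one]; have : x = 0 := Subsingleton.elim _ _; rw [this, map_zero]⟩
  have hn1 : 1 ≤ n := minpoly.natDegree_pos hint
  have haev : Polynomial.aeval (x : R) p = 0 := minpoly.aeval k (x : R)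
  have hsum : (x : R) ^ n = - ∑ j ∈ Finset.range n, p.coeff j • (x : R) ^ j := by
    have h := Polynomial.aeval_eq_sum_range (x := (x : R)) (p := p)
    rw [Finset.sum_range_succ, haev, ← hn, (minpoly.monic hint).coeff_natDegree,
      one_smul] at h
    rw [add_comm] at h
    exact eq_neg_of_add_eq_zero_left h.symm
  have hxn : (x : R) ^ n ∈ V ^ (i * n - 1) := by
    rw [hsum]
    refine neg_mem (Submodule.sum_mem _ fun j hj => Submodule.smul_mem _ _ ?_)
    have hjn : j + 1 ≤ n := Finset.mem_range.mp hj
    have h2 : i * (j + 1) ≤ i * n := Nat.mul_le_mul_left i hjn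
    have h3 : i * j + 1 ≤ i * n := by
      have : i * j + i = i * (j + 1) := by ring
      omega
    exact hmono _ _ (by omega) (hmem j)
  have h1n : 1 ≤ i * n := Nat.one_le_iff_ne_zero.mpr (by positivity)
  obtain ⟨t, ht⟩ : ∃ t, i * n = t + 1 := ⟨i * n - 1, by omega⟩
  refine ⟨n, ?_⟩
  rw [hpow n, hcongr ht rfl (hmem n) (by rw [← ht]; exact hmem n)]
  exact hker t _ (by simpa [show t = i * n - 1 by omega] using hxn)
end

section
/- Let k be a field and R a k-algebra generated by a finite-dimensional subspace V containing 1, and suppose R is algebraic over k. If the associated graded ring gr R satisfies a polynomial identity, then R is finite dimensional over k. -/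
/-- A ring satisfies a polynomial identity: there is a nonzero (multilinear) identity
`∑_σ c_σ x_{σ 1} ⋯ x_{σ n} = 0` with some coefficient `±1`. -/
def SatisfiesPolyIdentity (A : Type) [Ring A] : Prop :=
  ∃ n : ℕ, 0 < n ∧ ∃ c : Equiv.Perm (Fin n) → ℤ,
    (∃ σ, c σ = 1 ∨ c σ = -1) ∧
    ∀ a : Fin n → A,
      ∑ σ : Equiv.Perm (Fin n), c σ • ((List.finRange n).map fun i => a (σ i)).prod = 0

/-!
Suppose `R` is infinite dimensional and order a basis `b` of `V`. Call a word in the letters `b i`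
reducible if its image in `gr R` is a combination of images of lexicographically smaller words of
the same length; reducibility passes to every word containing a reducible factor. If all words of
length `n + 1` were reducible, they would all vanish in `gr R`, i.e. `V ^ (n + 1) ≤ V ^ n`, and
the filtration would stop growing. So there are irreducible words of every length, and by Kőnig's
lemma an infinite word `W` all of whose factors are irreducible.

`W` is not eventually periodic: a period `z` would make every power `z ^ e` irreducible, but the
product of `z` is algebraic, so one of its powers drops in the filtration and vanishes in `gr R`.
A word that is not eventually periodic has more than `n` factors of length `n` occurring
infinitely often (Morse–Hedlund); occurrences of `n` of them, taken in decreasing order, cut a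
factor of `W` into `n` blocks each branching lexicographically above the next. Evaluating the
multilinear identity of `gr R` at the images of these blocks writes that factor through the
smaller words obtained by permuting the blocks, so it is reducible: a contradiction (Shirshov's
argument).
-/

theorem pow_le_pow_of_pow_succ_le {M : Type*} [Monoid M] [Preorder M] [MulLeftMono M]
    [MulRightMono M] {a : M} (ha : 1 ≤ a) {m : ℕ} (h : a ^ (m + 1) ≤ a ^ m) (t : ℕ) :
    a ^ t ≤ a ^ m := by
  induction t with
  | zero => exact pow_le_pow_right' ha (Nat.zero_le m)
  | succ t ih =>
    rcases le_or_gt (t + 1) m with ht | ht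
    · exact pow_le_pow_right' ha ht
    · calc a ^ (t + 1) = a ^ t * a := pow_succ a t
        _ ≤ a ^ m * a := mul_le_mul_left ih a
        _ = a ^ (m + 1) := (pow_succ a m).symm
        _ ≤ a ^ m := h

theorem Submodule.finiteDimensional_of_pow_succ_le {k R : Type*} [Field k] [Ring R]
    [Algebra k R] {V : Submodule k R} [FiniteDimensional k V] (h1 : (1 : R) ∈ V)
    (hgen : Algebra.adjoin k (V : Set R) = ⊤) {m : ℕ} (h : V ^ (m + 1) ≤ V ^ m) :
    FiniteDimensional k R := by
  have hV : 1 ≤ V := Submodule.one_le.mpr h1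
  have hle := pow_le_pow_of_pow_succ_le hV h
  let S : Subalgebra k R := (V ^ m).toSubalgebra (Submodule.one_le.mp (one_le_pow_of_one_le' hV m))
    fun x y hx hy => hle (m + m) (pow_add V m m ▸ Submodule.mul_mem_mul hx hy)
  have htop : V ^ m = ⊤ := by
    refine top_unique fun x _ => ?_
    have hx : x ∈ Algebra.adjoin k (V : Set R) := hgen ▸ Algebra.mem_top
    exact Algebra.adjoin_le (S := S) (fun y hy => hle 1 ((pow_one V).symm ▸ hy)) hx
  refine Module.finite_def.mpr (htop ▸ ?_)
  exact (Module.Finite.iff_fg.mp inferInstance).pow m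

theorem IsIntegral.exists_pow_mem_pow_mul_pred {k R : Type*} [CommRing k] [Ring R] [Algebra k R]
    [Nontrivial R] {V : Submodule k R} (h1 : (1 : R) ∈ V) {r : R} (hr : IsIntegral k r) {m : ℕ}
    (hrV : r ∈ V ^ m) : ∃ e, 0 < e ∧ r ^ e ∈ V ^ (m * (e - 1)) := by
  refine ⟨(minpoly k r).natDegree, minpoly.natDegree_pos hr, ?_⟩
  have h := minpoly.aeval k r
  rw [(minpoly.monic hr).as_sum] at h
  simp only [map_add, map_pow, Polynomial.aeval_X, map_sum, map_mul, Polynomial.aeval_C,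
    ← Algebra.smul_def] at h
  rw [eq_neg_of_add_eq_zero_left h]
  refine Submodule.neg_mem _ (Submodule.sum_mem _ fun i hi => Submodule.smul_mem _ _ ?_)
  have hi : i ≤ (minpoly k r).natDegree - 1 := by have := Finset.mem_range.mp hi; omega
  refine pow_le_pow_right' (Submodule.one_le.mpr h1) (Nat.mul_le_mul_left m hi) ?_
  rw [pow_mul]
  exact Submodule.pow_mem_pow _ hrV i

section BranchesAbove

variable {α : Type*} [LinearOrder α]

def List.BranchesAbove (x y : List α) : Prop :=
  ∃ (c t₁ t₂ : List α) (a b : α), x = c ++ a :: t₁ ∧ y = c ++ b :: t₂ ∧ b < a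

theorem List.branchesAbove_of_lt {x y : List α} (hlen : y.length = x.length) (h : y < x) :
    x.BranchesAbove y := by
  induction h with
  | nil => simp at hlen
  | @rel a l₁ b l₂ hab => exact ⟨[], l₂, l₁, b, a, rfl, rfl, hab⟩
  | @cons a l₁ l₂ _ ih =>
    obtain ⟨c, t₁, t₂, x, y, rfl, rfl, hxy⟩ := ih (by simpa using hlen)
    exact ⟨a :: c, t₁, t₂, x, y, rfl, rfl, hxy⟩

namespace List.BranchesAbove

theorem append {x y : List α} (h : x.BranchesAbove y) (s t : List α) :
    (x ++ s).BranchesAbove (y ++ t) := by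
  obtain ⟨c, t₁, t₂, a, b, rfl, rfl, hba⟩ := h
  exact ⟨c, t₁ ++ s, t₂ ++ t, a, b, by simp, by simp, hba⟩

theorem lt {x y : List α} (h : x.BranchesAbove y) : y < x := by
  obtain ⟨c, t₁, t₂, a, b, rfl, rfl, hba⟩ := h
  exact List.Lex.append_left _ (List.Lex.rel hba) c

end List.BranchesAbove

theorem List.length_flatten_map_perm {β : Type*} {n : ℕ} (v : Fin n → List β)
    (σ : Equiv.Perm (Fin n)) :
    ((finRange n).map (v ∘ σ)).flatten.length = ((finRange n).map v).flatten.length := by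
  rw [List.length_flatten, List.length_flatten, ← List.map_map]
  exact ((σ.map_finRange_perm.map v).map List.length).sum_eq

/-- At the first block that `σ` moves, a later and hence smaller block takes its place. -/
theorem List.flatten_map_perm_lt {n : ℕ} {v : Fin n → List α}
    (hv : ∀ i j, i < j → (v i).BranchesAbove (v j)) {σ : Equiv.Perm (Fin n)} (hσ : σ ≠ 1) :
    ((finRange n).map (v ∘ σ)).flatten < ((finRange n).map v).flatten := by
  have hsupp : σ.support.Nonempty := Finset.nonempty_iff_ne_empty.mpr (by simpa using hσ)
  set j := σ.support.min' hsupp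
  have hj : σ j ≠ j := Equiv.Perm.mem_support.mp (σ.support.min'_mem hsupp)
  have hfix : ∀ i < j, σ i = i := fun i hi => by
    by_contra h
    exact (σ.support.min'_le i (Equiv.Perm.mem_support.mpr h)).not_gt hi
  have hjσ : j < σ j := (σ.support.min'_le _ (σ.apply_mem_support.mpr
    (σ.support.min'_mem hsupp))).lt_of_ne' hj
  obtain ⟨s, t, hst⟩ := List.append_of_mem (List.mem_finRange j)
  have hs : ∀ i ∈ s, i < j := by
    have := List.pairwise_lt_finRange n
    rw [hst, List.pairwise_append] at this
    exact fun i hi => this.2.2 i hi j List.mem_cons_self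
  have hmap : s.map (v ∘ σ) = s.map v :=
    List.map_congr_left fun i hi => by simp [hfix i (hs i hi)]
  rw [hst]
  simp only [List.map_append, List.map_cons, List.flatten_append, List.flatten_cons, hmap]
  exact List.Lex.append_left _ (((hv j (σ j) hjσ).append _ _).lt) _

end BranchesAbove

section InfiniteWords

variable {β : Type*}

def factorAt (W : ℕ → β) (i L : ℕ) : List β := List.ofFn fun p : Fin L => W (i + p)

def IsEventuallyPeriodic (W : ℕ → β) : Prop := ∃ i j, i < j ∧ ∀ x, W (i + x) = W (j + x)

def recurrentFactors (W : ℕ → β) (L : ℕ) : Set (List β) :=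
  {u | {i | factorAt W i L = u}.Infinite}

section factorAt

variable (W : ℕ → β)

@[simp] theorem length_factorAt (i L : ℕ) : (factorAt W i L).length = L := by simp [factorAt]

theorem factorAt_add (i s t : ℕ) :
    factorAt W i (s + t) = factorAt W i s ++ factorAt W (i + s) t := by
  simp [factorAt, List.ofFn_add, Nat.add_assoc]

theorem factorAt_succ (i L : ℕ) : factorAt W i (L + 1) = factorAt W i L ++ [W (i + L)] := by
  rw [factorAt_add]
  simp [factorAt]

theorem factorAt_succ' (i L : ℕ) : factorAt W i (L + 1) = W i :: factorAt W (i + 1) L := by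
  rw [Nat.add_comm, factorAt_add]
  simp [factorAt]

theorem IsEventuallyPeriodic.of_forall_eq {i j : ℕ} (hij : i ≠ j)
    (h : ∀ x, W (i + x) = W (j + x)) :
    IsEventuallyPeriodic W := by
  rcases hij.lt_or_gt with hij | hij
  · exact ⟨i, j, hij, h⟩
  · exact ⟨j, i, hij, fun x => (h x).symm⟩

theorem factorAt_eq_flatten_replicate {i j : ℕ} (hij : i ≤ j)
    (h : ∀ x, W (i + x) = W (j + x)) (e : ℕ) :
    factorAt W i ((j - i) * e) = (List.replicate e (factorAt W i (j - i))).flatten := by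
  induction e with
  | zero => simp [factorAt]
  | succ e ih =>
    have hshift : factorAt W j ((j - i) * e) = factorAt W i ((j - i) * e) := by
      simp only [factorAt, h]
    rw [Nat.mul_succ, Nat.add_comm, factorAt_add, Nat.add_sub_cancel' hij, hshift, ih,
      List.replicate_succ, List.flatten_cons]

end factorAt

section recurrentFactors

variable (W : ℕ → β)

theorem mem_recurrentFactors_zero : [] ∈ recurrentFactors W 0 := by
  simpa [recurrentFactors, factorAt] using Set.infinite_univ

theorem recurrentFactors_subset (L : ℕ) : recurrentFactors W L ⊆ {u | u.length = L} := by
  intro u hu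
  obtain ⟨i, rfl⟩ := hu.nonempty
  exact length_factorAt W i L

theorem take_mem_recurrentFactors {L : ℕ} {u : List β} (hu : u ∈ recurrentFactors W (L + 1)) :
    u.take L ∈ recurrentFactors W L :=
  hu.mono fun i (hi : _ = u) => by simp [← hi, factorAt_succ]

theorem image_take_recurrentFactors [Finite β] (L : ℕ) :
    (fun u => u.take L) '' recurrentFactors W (L + 1) = recurrentFactors W L := by
  refine subset_antisymm (Set.image_subset_iff.mpr fun u hu => take_mem_recurrentFactors W hu)
    fun u hu => ?_
  have hcover : {i | factorAt W i L = u} ⊆ ⋃ a, {i | factorAt W i (L + 1) = u ++ [a]} :=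
    fun i (hi : _ = u) => Set.mem_iUnion.mpr ⟨W (i + L), by simp [factorAt_succ, hi]⟩
  obtain ⟨a, ha⟩ : ∃ a, (u ++ [a]) ∈ recurrentFactors W (L + 1) := by
    by_contra! h
    exact hu ((Set.finite_iUnion fun a => Set.not_infinite.mp (h a)).subset hcover)
  have hlen : u.length = L := recurrentFactors_subset W L hu
  exact ⟨u ++ [a], ha, by simp [← hlen]⟩

variable [Finite β]

theorem recurrentFactors_finite (L : ℕ) : (recurrentFactors W L).Finite :=
  (List.finite_length_eq β L).subset (recurrentFactors_subset W L)

theorem exists_forall_ge_factorAt_mem_recurrentFactors (L : ℕ) :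
    ∃ P, ∀ i, P ≤ i → factorAt W i L ∈ recurrentFactors W L := by
  have hfin : {i | factorAt W i L ∉ recurrentFactors W L}.Finite := by
    refine (((List.finite_length_eq β L).sdiff (t := recurrentFactors W L)).biUnion
      fun u hu => Set.not_infinite.mp hu.2).subset fun i hi => ?_
    exact Set.mem_biUnion (x := factorAt W i L) ⟨length_factorAt W i L, hi⟩ rfl
  obtain ⟨P, hP⟩ := hfin.bddAbove
  exact ⟨P + 1, fun i hi => by_contra fun h => absurd (hP h) (by omega)⟩

end recurrentFactors

section MorseHedlund

variable {W : ℕ → β} [Finite β]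

theorem IsEventuallyPeriodic.of_ncard_recurrentFactors_eq {L : ℕ}
    (h : (recurrentFactors W (L + 1)).ncard = (recurrentFactors W L).ncard) :
    IsEventuallyPeriodic W := by
  have hinj : Set.InjOn (fun u => u.take L) (recurrentFactors W (L + 1)) :=
    Set.injOn_of_ncard_image_eq (by rw [image_take_recurrentFactors, h])
      (recurrentFactors_finite W _)
  obtain ⟨P, hP⟩ := exists_forall_ge_factorAt_mem_recurrentFactors W (L + 1)
  -- Beyond `P`, the factor of length `L` at a position determines the letter there.
  have hstep : ∀ i j, P ≤ i → P ≤ j → factorAt W i L = factorAt W j L →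
      W i = W j ∧ factorAt W (i + 1) L = factorAt W (j + 1) L := by
    intro i j hi hj hij
    have := hinj (hP i hi) (hP j hj) (by simp [factorAt_succ, hij])
    rw [factorAt_succ', factorAt_succ'] at this
    exact List.cons_eq_cons.mp this
  obtain ⟨i, hi, j, hj, hne, heq⟩ := (Set.Ici_infinite P).exists_ne_map_eq_of_mapsTo
    (f := fun i => factorAt W i L) (fun i _ => length_factorAt W i L) (List.finite_length_eq β L)
  have hfac : ∀ x, factorAt W (i + x) L = factorAt W (j + x) L := by
    intro x
    induction x with
    | zero => exact heq
    | succ x ih => exact (hstep _ _ (by grind) (by grind) ih).2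
  exact .of_forall_eq W hne fun x => (hstep _ _ (by grind) (by grind) (hfac x)).1

theorem lt_ncard_recurrentFactors (hW : ¬ IsEventuallyPeriodic W) (L : ℕ) :
    L < (recurrentFactors W L).ncard := by
  induction L with
  | zero =>
    exact (Set.ncard_pos (recurrentFactors_finite W 0)).mpr ⟨[], mem_recurrentFactors_zero W⟩
  | succ L ih =>
    have hle : (recurrentFactors W L).ncard ≤ (recurrentFactors W (L + 1)).ncard :=
      image_take_recurrentFactors W L ▸ Set.ncard_image_le (recurrentFactors_finite W _)
    have hne := mt (IsEventuallyPeriodic.of_ncard_recurrentFactors_eq (L := L)) hW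
    omega

end MorseHedlund

theorem exists_seq_mem_add_le {S : ℕ → Set ℕ} (hS : ∀ p, (S p).Infinite) (d : ℕ) :
    ∃ q : ℕ → ℕ, ∀ p, q p ∈ S p ∧ q p + d ≤ q (p + 1) := by
  choose next hnext using fun p m => (hS p).exists_gt m
  let q : ℕ → ℕ := fun p => Nat.rec (next 0 0) (fun p qp => next (p + 1) (qp + d)) p
  refine ⟨q, fun p => ⟨?_, (hnext (p + 1) (q p + d)).2.le⟩⟩
  cases p with
  | zero => exact (hnext 0 0).1
  | succ p => exact (hnext (p + 1) _).1

theorem flatten_map_range_factorAt (W : ℕ → β) {q : ℕ → ℕ} (hq : Monotone q) (m : ℕ) :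
    ((List.range m).map fun p => factorAt W (q p) (q (p + 1) - q p)).flatten =
      factorAt W (q 0) (q m - q 0) := by
  induction m with
  | zero => simp [factorAt]
  | succ m ih =>
    have h0 : q 0 ≤ q m := hq (Nat.zero_le m)
    have h1 : q m ≤ q (m + 1) := hq (Nat.le_succ m)
    rw [List.range_succ, List.map_append, List.flatten_append, ih,
      show q (m + 1) - q 0 = (q m - q 0) + (q (m + 1) - q m) by omega, factorAt_add,
      show q 0 + (q m - q 0) = q m by omega]
    simp

theorem exists_factorAt_eq_flatten_branchesAbove [Finite β] [LinearOrder β] {W : ℕ → β}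
    (hW : ¬ IsEventuallyPeriodic W) (n : ℕ) :
    ∃ (i L : ℕ) (v : Fin n → List β), (∀ a b, a < b → (v a).BranchesAbove (v b)) ∧
      ((List.finRange n).map v).flatten = factorAt W i L := by
  have hcard : n ≤ (recurrentFactors_finite W n).toFinset.card := by
    rw [← Set.ncard_eq_toFinset_card _ (recurrentFactors_finite W n)]
    exact (lt_ncard_recurrentFactors hW n).le
  obtain ⟨t, hts, htcard⟩ := Finset.exists_subset_card_eq hcard
  let a : Fin n → List β := fun p => t.orderIsoOfFin htcard p.rev
  have ha_anti : StrictAnti a := fun p p' h =>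
    (t.orderIsoOfFin htcard).strictMono (Fin.rev_lt_rev.mpr h)
  have ha_mem : ∀ p, a p ∈ recurrentFactors W n := fun p =>
    (Set.Finite.mem_toFinset _).mp (hts (t.orderIsoOfFin htcard p.rev).2)
  -- Occurrences of `a 0, a 1, …`, each at least `n` letters after the previous one (the
  -- condition on `q p` is vacuous for `p ≥ n`).
  obtain ⟨q, hq⟩ := exists_seq_mem_add_le
    (S := fun p => {i | ∀ h : p < n, factorAt W i n = a ⟨p, h⟩}) (fun p => by
      by_cases hp : p < n
      · exact (ha_mem ⟨p, hp⟩).mono fun i hi _ => hi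
      · exact Set.infinite_univ.mono fun i _ h => absurd h hp) n
  have hq_mono : Monotone q := monotone_nat_of_le_succ fun p => by grind
  let v : Fin n → List β := fun p => factorAt W (q p) (q (p + 1) - q p)
  refine ⟨q 0, q n - q 0, v, fun p₁ p₂ h₁₂ => ?_, ?_⟩
  · have hv : ∀ p : Fin n, v p = a p ++ factorAt W (q p + n) (q (p + 1) - q p - n) := fun p => by
      simp only [v]
      rw [← (hq p).1 p.2, ← factorAt_add]
      have := (hq p).2
      congr 1
      omega
    rw [hv, hv]
    have hlen : ∀ p, (a p).length = n := fun p => recurrentFactors_subset W n (ha_mem p)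
    exact (List.branchesAbove_of_lt (by rw [hlen, hlen]) (ha_anti h₁₂)).append _ _
  · rw [← flatten_map_range_factorAt W hq_mono, ← List.map_coe_finRange_eq_range, List.map_map]
    rfl

/-- Kőnig's lemma, for the tree of words in `B`. -/
theorem exists_forall_factorAt_mem {γ : Type*} [Finite γ] {B : Set (List γ)}
    (hB : ∀ l ∈ B, ∀ u, u <:+: l → u ∈ B) (hlong : ∀ L, ∃ l ∈ B, L ≤ l.length) :
    ∃ W : ℕ → γ, ∀ i L, factorAt W i L ∈ B := by
  let α : ℕ → Type _ := fun L => {l : List γ // l ∈ B ∧ l.length = L}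
  have hfin : ∀ L, Finite (α L) := fun L =>
    ((List.finite_length_eq γ L).subset fun _ h => h.2).to_subtype
  have hne : ∀ L, Nonempty (α L) := fun L => by
    obtain ⟨l, hl, hL⟩ := hlong L
    exact ⟨⟨l.take L, hB l hl _ (l.take_prefix L).isInfix, by simp [hL]⟩⟩
  let π : {i j : ℕ} → i ≤ j → α j → α i := fun {i j} hij u =>
    ⟨u.1.take i, hB _ u.2.1 _ (u.1.take_prefix i).isInfix, by simp [u.2.2, hij]⟩
  obtain ⟨f, hf⟩ := exists_seq_forall_proj_of_forall_finite π
    (fun i u => Subtype.ext (List.take_of_length_le u.2.2.le))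
    (fun i j k hij hjk u => Subtype.ext (by simp [π, List.take_take, min_eq_left hij]))
    (fun i a => Set.toFinite _)
  let W : ℕ → γ := fun x => (f (x + 1)).1[x]'(by simp [(f (x + 1)).2.2])
  have hW : ∀ L, factorAt W 0 L = (f L).1 := fun L => by
    refine List.ext_getElem (by simp [(f L).2.2]) fun p hp _ => ?_
    have hpL : p + 1 ≤ L := by simpa using hp
    simp only [factorAt, List.getElem_ofFn, Nat.zero_add, W]
    rw [← hf hpL]
    simp [π]
  refine ⟨W, fun i L => hB _ (hW (i + L) ▸ (f (i + L)).2.1) _ ?_⟩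
  rw [factorAt_add, Nat.zero_add]
  exact List.infix_append_right

end InfiniteWords

section Words

variable {k R : Type*} [CommSemiring k] [Semiring R] [Algebra k R] {V : Submodule k R}
  {ι : Type*} (b : ι → V)

def wordProd (l : List ι) : R := (l.map fun i => (b i : R)).prod

theorem wordProd_mem_pow (l : List ι) : wordProd b l ∈ V ^ l.length := by
  induction l with
  | nil => simpa [wordProd] using Submodule.one_le.mp (le_refl (1 : Submodule k R))
  | cons i l ih =>
    rw [List.length_cons, pow_succ']
    exact Submodule.mul_mem_mul (b i).2 ih

theorem wordProd_append (l₁ l₂ : List ι) :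
    wordProd b (l₁ ++ l₂) = wordProd b l₁ * wordProd b l₂ := by
  simp [wordProd]

theorem wordProd_flatten_replicate (l : List ι) (e : ℕ) :
    wordProd b (List.replicate e l).flatten = wordProd b l ^ e := by
  induction e with
  | zero => simp [wordProd]
  | succ e ih => rw [List.replicate_succ, List.flatten_cons, wordProd_append, ih, pow_succ']

theorem span_wordProd_eq_pow (hb : Submodule.span k (Set.range fun i => (b i : R)) = V) (n : ℕ) :
    Submodule.span k (wordProd b '' {l | l.length = n}) = V ^ n := by
  induction n with
  | zero =>
    have : wordProd b '' {l | l.length = 0} = {1} := by simp [wordProd]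
    rw [this, pow_zero, Submodule.one_eq_span]
  | succ n ih =>
    have hV : V * Submodule.span k (wordProd b '' {l | l.length = n}) =
        Submodule.span k (Set.range fun i => (b i : R)) *
          Submodule.span k (wordProd b '' {l | l.length = n}) := by
      rw [hb]
    rw [pow_succ', ← ih, hV, Submodule.span_mul_span]
    congr 1
    ext r
    simp only [Set.mem_image, Set.mem_mul, Set.mem_range]
    constructor
    · rintro ⟨_ | ⟨i, l⟩, hl, rfl⟩
      · simp at hl
      · exact ⟨b i, ⟨i, rfl⟩, wordProd b l, ⟨l, by simpa using hl, rfl⟩, rfl⟩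
    · rintro ⟨_, ⟨i, rfl⟩, _, ⟨l, hl, rfl⟩, rfl⟩
      exact ⟨i :: l, congrArg Nat.succ hl, rfl⟩

end Words

namespace GrRealization

variable {k R A : Type} [Field k] [Ring R] [Algebra k R] [Ring A] [Algebra k A]
  {V : Submodule k R} (G : GrRealization k R A V) {ι : Type*} (b : ι → V)

theorem φ_congr {i j : ℕ} (hij : i = j) (x : (V ^ i : Submodule k R))
    (y : (V ^ j : Submodule k R)) (hxy : (x : R) = y) : G.φ i x = G.φ j y := by
  subst hij
  rw [Subtype.ext hxy]

def grWord (l : List ι) : A := G.φ l.length ⟨wordProd b l, wordProd_mem_pow b l⟩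

theorem grWord_nil : G.grWord b [] = 1 :=
  (G.φ_congr rfl _ _ (by simp [wordProd])).trans G.map_one

theorem grWord_append (l₁ l₂ : List ι) :
    G.grWord b (l₁ ++ l₂) = G.grWord b l₁ * G.grWord b l₂ :=
  (G.φ_congr List.length_append _ ⟨_, _⟩ (wordProd_append b l₁ l₂)).trans
    (G.map_mul _ _ _ _)

theorem grWord_flatten (L : List (List ι)) :
    G.grWord b L.flatten = (L.map (G.grWord b)).prod := by
  induction L with
  | nil => exact G.grWord_nil b
  | cons l L ih => rw [List.flatten_cons, grWord_append, ih, List.map_cons, List.prod_cons]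

theorem grWord_eq_zero_iff {l : List ι} {n : ℕ} (hl : l.length = n + 1) :
    G.grWord b l = 0 ↔ wordProd b l ∈ V ^ n := by
  rw [grWord, G.φ_congr hl _ ⟨wordProd b l, hl ▸ wordProd_mem_pow b l⟩ rfl,
    ← LinearMap.mem_ker, G.ker_succ]
  rfl

def IsReducible [LT ι] (l : List ι) : Prop :=
  G.grWord b l ∈ Submodule.span k (G.grWord b '' {l' | l'.length = l.length ∧ l' < l})

theorem exists_grWord_flatten_replicate_eq_zero [Nontrivial R] (h1 : (1 : R) ∈ V) {z : List ι}
    (hz : z ≠ []) (hint : IsIntegral k (wordProd b z)) :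
    ∃ e, G.grWord b (List.replicate e z).flatten = 0 := by
  obtain ⟨e, he, hmem⟩ := hint.exists_pow_mem_pow_mul_pred h1 (wordProd_mem_pow b z)
  have hz : 0 < z.length := List.length_pos_of_ne_nil hz
  refine ⟨e, (G.grWord_eq_zero_iff b (n := z.length * e - 1) ?_).mpr ?_⟩
  · have := Nat.mul_pos hz he
    simp only [List.length_flatten, List.map_replicate, List.sum_replicate, smul_eq_mul,
      Nat.mul_comm e]
    omega
  · rw [wordProd_flatten_replicate]
    refine pow_le_pow_right' (Submodule.one_le.mpr h1) ?_ hmem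
    rw [Nat.mul_sub_one]
    omega

variable [LinearOrder ι]

theorem isReducible_of_grWord_eq_zero {l : List ι} (h : G.grWord b l = 0) : G.IsReducible b l := by
  rw [IsReducible, h]
  exact Submodule.zero_mem _

theorem IsReducible.of_infix {u l : List ι} (hu : G.IsReducible b u) (hul : u <:+: l) :
    G.IsReducible b l := by
  obtain ⟨s, t, rfl⟩ := hul
  let T : A →ₗ[k] A :=
    LinearMap.mulRight k (G.grWord b t) ∘ₗ LinearMap.mulLeft k (G.grWord b s)
  have hT : ∀ l, G.grWord b (s ++ l ++ t) = T (G.grWord b l) := fun l => by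
    simp [T, grWord_append, mul_assoc]
  have := Submodule.mem_map_of_mem (f := T) hu
  rw [Submodule.map_span, ← Set.image_comp] at this
  rw [IsReducible, hT]
  refine Submodule.span_mono ?_ this
  rintro _ ⟨l', ⟨hlen, hlt⟩, rfl⟩
  refine ⟨s ++ l' ++ t, ⟨by simp [hlen], ?_⟩, hT l'⟩
  rw [List.append_assoc, List.append_assoc]
  exact List.Lex.append_left _ ((List.branchesAbove_of_lt hlen hlt).append t t).lt s

/-- If every word of length `n` is reducible, a lexicographically minimal word of length `n` with
nonzero image would be a combination of zeros. -/
theorem grWord_eq_zero_of_forall_isReducible [Finite ι] {n : ℕ}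
    (h : ∀ l : List ι, l.length = n → G.IsReducible b l) (l : List ι) (hl : l.length = n) :
    G.grWord b l = 0 := by
  by_contra hne
  obtain ⟨l₀, ⟨hl₀, hne₀⟩, hmin⟩ := ((List.finite_length_eq ι n).subset
    (t := {l | l.length = n ∧ G.grWord b l ≠ 0}) fun _ h => h.1).exists_minimal ⟨l, hl, hne⟩
  refine hne₀ ((Submodule.mem_bot k).mp (Submodule.span_le.mpr ?_ (h l₀ hl₀)))
  rintro _ ⟨l', ⟨hlen, hlt⟩, rfl⟩
  by_contra hne'
  exact hlt.not_ge (hmin ⟨hlen.trans hl₀, hne'⟩ hlt.le)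

theorem pow_succ_le_of_forall_isReducible [Finite ι]
    (hb : Submodule.span k (Set.range fun i => (b i : R)) = V) {n : ℕ}
    (h : ∀ l : List ι, l.length = n + 1 → G.IsReducible b l) : V ^ (n + 1) ≤ V ^ n := by
  rw [← span_wordProd_eq_pow b hb, Submodule.span_le]
  rintro _ ⟨l, hl, rfl⟩
  exact (G.grWord_eq_zero_iff b hl).mp (G.grWord_eq_zero_of_forall_isReducible b h l hl)

/-- Evaluating the identity at the images of the blocks expresses the word through the words
obtained by permuting the blocks, which are lexicographically smaller. -/
theorem exists_forall_isReducible_flatten (hPI : SatisfiesPolyIdentity A) :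
    ∃ n, ∀ v : Fin n → List ι, (∀ i j, i < j → (v i).BranchesAbove (v j)) →
      G.IsReducible b ((List.finRange n).map v).flatten := by
  obtain ⟨n, -, c, ⟨σ₀, hσ₀⟩, hid⟩ := hPI
  refine ⟨n, fun v hv => ?_⟩
  let P : Equiv.Perm (Fin n) → A := fun σ =>
    G.grWord b ((List.finRange n).map (v ∘ ⇑(σ₀⁻¹ * σ))).flatten
  have hsum : c σ₀ • P σ₀ + ∑ σ ∈ Finset.univ.erase σ₀, c σ • P σ = 0 := by
    rw [Finset.add_sum_erase _ (fun σ => c σ • P σ) (Finset.mem_univ σ₀),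
      ← hid fun i => G.grWord b (v (σ₀⁻¹ i))]
    refine Finset.sum_congr rfl fun σ _ => ?_
    simp only [P, grWord_flatten, List.map_map]
    rfl
  have hP : P σ₀ = G.grWord b ((List.finRange n).map v).flatten := by
    simp only [P, inv_mul_cancel, Equiv.Perm.coe_one, Function.comp_id]
  have hrest : ∑ σ ∈ Finset.univ.erase σ₀, c σ • P σ ∈ Submodule.span k (G.grWord b ''
      {l' | l'.length = (((List.finRange n).map v).flatten).length ∧
        l' < ((List.finRange n).map v).flatten}) := by
    refine Submodule.sum_mem _ fun σ hσ => zsmul_mem (Submodule.subset_span ?_) _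
    refine ⟨_, ⟨List.length_flatten_map_perm v _, List.flatten_map_perm_lt hv fun h => ?_⟩,
      rfl⟩
    exact (Finset.mem_erase.mp hσ).1 (inv_mul_eq_one.mp h).symm
  have hc : c σ₀ * c σ₀ = 1 := by rcases hσ₀ with h | h <;> simp [h]
  have hw : G.grWord b ((List.finRange n).map v).flatten =
      c σ₀ • -∑ σ ∈ Finset.univ.erase σ₀, c σ • P σ := by
    rw [← eq_neg_of_add_eq_zero_left hsum, smul_smul, hc, one_smul, hP]
  rw [IsReducible, hw]
  exact zsmul_mem (Submodule.neg_mem _ hrest) _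

end GrRealization

/-- If `R` is a finitely generated algebraic algebra over `k` and the associated graded
ring `gr R` satisfies a polynomial identity, then `R` is finite dimensional over `k`. -/
theorem finiteDimensional_of_gr_PI {k R A : Type} [Field k] [Ring R] [Algebra k R]
    [Ring A] [Algebra k A] (V : Submodule k R) (h1 : (1 : R) ∈ V)
    [FiniteDimensional k V] (hgen : Algebra.adjoin k (V : Set R) = ⊤)
    [Algebra.IsAlgebraic k R] (G : GrRealization k R A V)
    (hPI : SatisfiesPolyIdentity A) :
    FiniteDimensional k R := by
  rcases subsingleton_or_nontrivial R with hR | hR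
  · infer_instance
  by_contra hinf
  let b := Module.finBasis k V
  have hb : Submodule.span k (Set.range fun i => (b i : R)) = V := by
    rw [show (Set.range fun i => (b i : R)) = V.subtype '' Set.range b from Set.range_comp _ _,
      Submodule.span_image, b.span_eq, Submodule.map_top, Submodule.range_subtype]
  have hlong : ∀ L, ∃ l ∈ {l | ¬ G.IsReducible b l}, L ≤ l.length := fun L => by
    by_contra! h
    exact hinf (V.finiteDimensional_of_pow_succ_le h1 hgen
      (G.pow_succ_le_of_forall_isReducible b hb (n := L) fun l hl => by_contra fun hl' => by
        have := h l hl'; omega))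
  obtain ⟨W, hW⟩ := exists_forall_factorAt_mem (B := {l | ¬ G.IsReducible b l})
    (fun l hl u hul hu => hl (hu.of_infix G b hul)) hlong
  have hper : ¬ IsEventuallyPeriodic W := by
    rintro ⟨i, j, hij, h⟩
    obtain ⟨e, he⟩ := G.exists_grWord_flatten_replicate_eq_zero b h1
      (z := factorAt W i (j - i)) (List.ne_nil_of_length_pos (by rw [length_factorAt]; omega))
      (Algebra.IsIntegral.isIntegral _)
    rw [← factorAt_eq_flatten_replicate W hij.le h] at he
    exact hW i _ (G.isReducible_of_grWord_eq_zero b he)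
  obtain ⟨n, hn⟩ := G.exists_forall_isReducible_flatten b hPI
  obtain ⟨i, L, v, hv, hvW⟩ := exists_factorAt_eq_flatten_branchesAbove hper n
  exact hW i L (hvW ▸ hn v hv)
end

section
/- If A is a ring with right Krull dimension, then every semiprime quotient A/I (I a semiprime ideal) is a right Goldie ring. -/
/-- `DevLE α P` says the (Gabriel–Rentschler) deviation of the poset `P` is at most the
ordinal `α`: every descending chain has all but finitely many of its factor intervals of
deviation strictly less than `α` (trivial factors allowed). -/
def DevLE (α : Ordinal.{0}) (P : Type) [Preorder P] : Prop :=
  ∀ f : ℕ → P, Antitone f → ∃ N : ℕ, ∀ n, N ≤ n →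
    f (n + 1) = f n ∨
      ∃ β : {o : Ordinal.{0} // o < α}, DevLE β.1 {x : P // f (n + 1) ≤ x ∧ x ≤ f n}
termination_by α
decreasing_by exact β.2

/-- A ring has right Krull dimension if the lattice of its right ideals (equivalently,
left ideals of `Aᵐᵒᵖ`) has deviation, i.e. deviation at most some ordinal. -/
def HasRightKrullDim (A : Type) [Ring A] : Prop :=
  ∃ α : Ordinal.{0}, DevLE α (Ideal Aᵐᵒᵖ)
/-!
Having deviation passes from `A` to `A/I`, so let `R` be semiprime with deviation on its lattice
of right ideals. Such a lattice contains no copy of `ℚ`, whereas an infinite independent family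
of nonzero right ideals gives one (sums over `Iio q` after reindexing by `ℚ`): `R` has finite
uniform dimension.

Semiprimeness makes `R` right nonsingular. If `z ≠ 0` had an essential right annihilator, take a
critical right ideal `C ≤ zR`, some `0 ≠ w ∈ C` and `t` with `wtw ≠ 0`. Left multiplication by
`wt` maps `wR` onto `wtwR ≤ C` with kernel `wR ∩ ann(wt) ≠ 0`, so the nonzero subideal `wtwR` of
`C` is isomorphic to a proper factor of `C`, contradicting criticality.

In a strictly ascending chain of right annihilators, either each step admits a nonzero principal
right ideal missing the previous term, which yields an infinite independent family, or some term
`ann(X)` is essential in the next one `K`; then `x a` is a nonzero singular element for any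
`a ∈ K` and `x ∈ X` with `x a ≠ 0`.
-/

open MulOpposite

section Deviation

variable {P Q : Type} [Preorder P] [Preorder Q] {α : Ordinal.{0}}

theorem DevLE.of_orderEmbedding (h : DevLE α Q) (e : P ↪o Q) : DevLE α P := by
  induction α using WellFoundedLT.induction generalizing P Q with
  | _ α IH =>
    rw [DevLE] at h ⊢
    intro f hf
    obtain ⟨N, hN⟩ := h (e ∘ f) (e.monotone.comp_antitone hf)
    refine ⟨N, fun n hn =>
      (hN n hn).imp (fun heq => e.injective heq) fun ⟨β, hβ⟩ => ⟨β, ?_⟩⟩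
    exact IH β β.2 hβ
      { toFun := fun x => ⟨e x, e.monotone x.2.1, e.monotone x.2.2⟩
        inj' := fun x y hxy => Subtype.ext (e.injective (congrArg Subtype.val hxy))
        map_rel_iff' := e.le_iff_le }

-- The factor between `g (-(N + 1))` and `g (-N)` contains a copy of `ℚ` again.
theorem DevLE.not_strictMono_rat (h : DevLE α P) (g : ℚ → P) : ¬ StrictMono g := by
  induction α using WellFoundedLT.induction generalizing P with
  | _ α IH =>
    intro hg
    rw [DevLE] at h
    obtain ⟨N, hN⟩ := h (fun n : ℕ => g (-n)) fun m n hmn => hg.monotone (by simpa using hmn)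
    set I := Set.Ioo (-((N + 1 : ℕ) : ℚ)) (-N)
    have hlt : -((N + 1 : ℕ) : ℚ) < -N := by push_cast; linarith
    rcases hN N le_rfl with heq | ⟨β, hβ⟩
    · exact (hg hlt).ne heq
    · have := Set.Ioo.infinite hlt
      obtain ⟨e⟩ := Order.embedding_from_countable_to_dense ℚ I
      exact IH β β.2 hβ
        (fun q => ⟨g (e q), hg.monotone (e q).2.1.le, hg.monotone (e q).2.2.le⟩)
        fun q r hqr => hg (e.strictMono hqr)

-- `sInf ∅ = 0`: this is junk unless `P` has deviation.
noncomputable def deviation (P : Type) [Preorder P] : Ordinal.{0} := sInf {α | DevLE α P}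

theorem DevLE.deviation_le (h : DevLE α P) : deviation P ≤ α := csInf_le' h

theorem DevLE.devLE_deviation (h : DevLE α P) : DevLE (deviation P) P :=
  csInf_mem (s := {α | DevLE α P}) ⟨α, h⟩

theorem DevLE.deviation_le_of_orderEmbedding (h : DevLE α Q) (e : P ↪o Q) :
    deviation P ≤ deviation Q :=
  (h.devLE_deviation.of_orderEmbedding e).deviation_le

theorem DevLE.devLE_Icc (h : DevLE α P) (a b : P) : DevLE α (Set.Icc a b) :=
  h.of_orderEmbedding (OrderEmbedding.subtype _)

theorem DevLE.deviation_Icc_mono (h : DevLE α P) {a b c d : P} (hca : c ≤ a) (hbd : b ≤ d) :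
    deviation (Set.Icc a b) ≤ deviation (Set.Icc c d) :=
  (h.devLE_Icc c d).deviation_le_of_orderEmbedding
    (Subtype.orderEmbedding fun _ hx => ⟨hca.trans hx.1, hx.2.trans hbd⟩)

theorem DevLE.exists_forall_deviation_Icc_lt {a b : P} (h : DevLE α (Set.Icc a b)) {S : Set P}
    (hS : S ⊆ Set.Icc a b) (hne : S.Nonempty) :
    ∃ c ∈ S, ∀ n ∈ S, n < c → deviation (Set.Icc n c) < α := by
  by_contra! hstep
  choose! step hstepS hstepLt hstepDev using hstep
  obtain ⟨c₀, hc₀⟩ := hne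
  set f : ℕ → P := fun k => step^[k] c₀ with hf
  have hfS : ∀ k, f k ∈ S := fun k => by
    induction k with
    | zero => exact hc₀
    | succ k ih => simpa only [hf, Function.iterate_succ_apply'] using hstepS _ ih
  have hfsucc : ∀ k, f (k + 1) = step (f k) := fun k => Function.iterate_succ_apply' _ _ _
  have hanti : StrictAnti f := strictAnti_nat_of_succ_lt fun k => by
    rw [hfsucc]; exact hstepLt _ (hfS k)
  rw [DevLE] at h
  obtain ⟨N, hN⟩ := h (fun k => ⟨f k, hS (hfS k)⟩) fun i j hij => hanti.antitone hij
  rcases hN N le_rfl with heq | ⟨β, hβ⟩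
  · exact (hanti N.lt_succ_self).ne (congrArg Subtype.val heq)
  · have hle : deviation (Set.Icc (f (N + 1)) (f N)) ≤ β := (hβ.of_orderEmbedding
      (P := Set.Icc (f (N + 1)) (f N))
      { toFun := fun x => ⟨⟨x, (hS (hfS _)).1.trans x.2.1, x.2.2.trans (hS (hfS _)).2⟩, x.2⟩
        inj' := fun x y hxy => Subtype.ext (congrArg (fun z => z.1.1) hxy)
        map_rel_iff' := Iff.rfl }).deviation_le
    have := hstepDev _ (hfS N)
    rw [← hfsucc] at this
    exact (this.trans hle).not_gt β.2

theorem DevLE.exists_critical_le [OrderBot P] (h : DevLE α P) {a : P} (ha : a ≠ ⊥) :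
    ∃ c ≤ a, c ≠ ⊥ ∧ ∀ d ≤ a, d ≠ ⊥ → ∀ n, ⊥ < n → n < c →
      deviation (Set.Icc n c) < deviation (Set.Icc ⊥ d) := by
  set T : Set P := {d | d ≤ a ∧ d ≠ ⊥}
  set c₀ := Function.argminOn (fun d => deviation (Set.Icc ⊥ d)) T ⟨a, le_rfl, ha⟩
  have hc₀ : c₀ ∈ T := Function.argminOn_mem _ _ _
  obtain ⟨c, ⟨hcc₀, hc⟩, hcrit⟩ :=
    (h.devLE_Icc ⊥ c₀).devLE_deviation.exists_forall_deviation_Icc_lt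
      (S := {d | d ≤ c₀ ∧ d ≠ ⊥}) (fun d hd => ⟨bot_le, hd.1⟩) ⟨c₀, le_rfl, hc₀.2⟩
  refine ⟨c, hcc₀.trans hc₀.1, hc, fun d hda hd n hn hnc => ?_⟩
  exact (hcrit n ⟨hnc.le.trans hcc₀, hn.ne'⟩ hnc).trans_le
    (Function.argminOn_le (fun d => deviation (Set.Icc ⊥ d)) T ⟨hda, hd⟩)

end Deviation

section Lattice

variable {L : Type} [CompleteLattice L]

theorem iSupIndep.strictMono_biSup {ι : Type*} {t : ι → L} (ht : iSupIndep t)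
    (hne : ∀ i, t i ≠ ⊥) : StrictMono fun s : Set ι => ⨆ i ∈ s, t i := by
  intro s s' hss'
  obtain ⟨i, his', his⟩ := Set.exists_of_ssubset hss'
  refine (biSup_mono hss'.le).lt_of_ne fun heq => hne i ?_
  exact (ht.disjoint_biSup his).eq_bot_of_le ((le_biSup t his').trans heq.ge)

theorem iSupIndep_of_disjoint_of_le_succ [IsModularLattice L] [IsCompactlyGenerated L]
    {g F : ℕ → L} (hg : Monotone g) (hFg : ∀ n, F n ≤ g (n + 1))
    (hdisj : ∀ n, Disjoint (F n) (g n)) : iSupIndep F := by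
  classical
  have hrange : ∀ n, (Finset.range n).SupIndep F := fun n => by
    induction n with
    | zero => exact Finset.supIndep_empty F
    | succ n ih =>
      rw [Finset.range_add_one]
      refine ih.insert ((hdisj n).mono_right (Finset.sup_le fun k hk => ?_))
      exact (hFg k).trans (hg (Finset.mem_range.1 hk))
  exact iSupIndep_iff_supIndep.2 fun s => (hrange (s.sup id + 1)).subset fun k hk =>
    Finset.mem_range.2 (Nat.lt_succ_of_le (Finset.le_sup (f := id) hk))

theorem DevLE.not_iSupIndep {α : Ordinal.{0}} (h : DevLE α L) {t : ℕ → L}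
    (hne : ∀ n, t n ≠ ⊥) : ¬ iSupIndep t := fun ht =>
  h.not_strictMono_rat _ <| ((ht.comp (Encodable.encode_injective (α := ℚ))).strictMono_biSup
    fun _ => hne _).comp fun _ _ hqr => Set.Iio_ssubset_Iio hqr

end Lattice

theorem exists_forall_eq_of_not_strictMono {α : Type*} [PartialOrder α] {p : α → Prop}
    (h : ∀ g : ℕ → α, (∀ n, p (g n)) → ¬ StrictMono g) (f : ℕ →o α) (hf : ∀ n, p (f n)) :
    ∃ N, ∀ m, N ≤ m → f m = f N := by
  have : WellFoundedGT {x // p x} := ⟨RelEmbedding.wellFounded_iff_isEmpty.2 ⟨fun e =>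
    h (fun n => (e n).1) (fun n => (e n).2) fun _ _ hmn => e.map_rel_iff.2 hmn⟩⟩
  obtain ⟨N, hN⟩ := WellFoundedGT.monotone_chain_condition
    (⟨fun n => ⟨f n, hf n⟩, fun _ _ hmn => f.mono hmn⟩ : ℕ →o {x // p x})
  exact ⟨N, fun m hm => congrArg Subtype.val (hN m hm).symm⟩

theorem Submodule.map_comap_inf_eq_of_le_map {S M M' : Type*} [Semiring S] [AddCommMonoid M]
    [AddCommMonoid M'] [Module S M] [Module S M'] (μ : M →ₗ[S] M') {W : Submodule S M}
    {Y : Submodule S M'} (hY : Y ≤ W.map μ) : (W ⊓ Y.comap μ).map μ = Y := by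
  refine le_antisymm (Submodule.map_le_iff_le_comap.2 inf_le_right) fun y hy => ?_
  obtain ⟨x, hxW, rfl⟩ := hY hy
  exact ⟨x, ⟨hxW, hy⟩, rfl⟩

-- The correspondence of submodules behind `W ⧸ (W ⊓ ker μ) ≃ W.map μ`.
def LinearMap.comapInfEmbedding {S M M' : Type*} [Semiring S] [AddCommMonoid M]
    [AddCommMonoid M'] [Module S M] [Module S M'] (μ : M →ₗ[S] M') (W : Submodule S M) :
    Set.Icc ⊥ (W.map μ) ↪o Set.Icc (W ⊓ LinearMap.ker μ) W :=
  OrderEmbedding.ofMapLEIff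
    (fun Y => ⟨W ⊓ Y.1.comap μ, inf_le_inf_left W (LinearMap.ker_le_comap μ), inf_le_left⟩)
    fun Y Y' => ⟨fun hle => by
      change Y.1 ≤ Y'.1
      rw [← Submodule.map_comap_inf_eq_of_le_map μ Y.2.2,
        ← Submodule.map_comap_inf_eq_of_le_map μ Y'.2.2]
      exact Submodule.map_mono hle,
      fun hle => inf_le_inf_left W (Submodule.comap_mono hle)⟩

section Ring

variable {R : Type} [Ring R]

theorem mem_span_op_singleton {k : R} {x : Rᵐᵒᵖ} :
    x ∈ Submodule.span Rᵐᵒᵖ {op k} ↔ ∃ d, op (k * d) = x := by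
  rw [Submodule.mem_span_singleton]
  exact ⟨fun ⟨a, ha⟩ => ⟨a.unop, ha⟩, fun ⟨d, hd⟩ => ⟨op d, hd⟩⟩

theorem disjoint_span_op_singleton_iff {k : R} {J : Ideal Rᵐᵒᵖ} :
    Disjoint (Submodule.span Rᵐᵒᵖ {op k}) J ↔ ∀ d, op (k * d) ∈ J → k * d = 0 := by
  simp only [Submodule.disjoint_def, mem_span_op_singleton, forall_exists_index,
    forall_apply_eq_imp_iff, op_eq_zero_iff]

-- `z` is in the right singular ideal: its right annihilator is essential (tested on each `uR`).
def IsRightSingular (z : R) : Prop :=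
  ∀ u : R, u ≠ 0 → ∃ d, u * d ≠ 0 ∧ z * (u * d) = 0

theorem isRightSingular_mul {x a : R}
    (h : ∀ u, a * u ≠ 0 → ∃ d, a * u * d ≠ 0 ∧ x * (a * u * d) = 0) :
    IsRightSingular (x * a) := by
  intro u hu
  by_cases hau : a * u = 0
  · exact ⟨1, by rwa [mul_one], by rw [mul_one, mul_assoc, hau, mul_zero]⟩
  · obtain ⟨d, hd, hxd⟩ := h u hau
    exact ⟨d, fun hud => hd (by rw [mul_assoc, hud, mul_zero]),
      by simpa only [mul_assoc] using hxd⟩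

theorem IsRightSingular.mul_right {z : R} (hz : IsRightSingular z) (s : R) :
    IsRightSingular (z * s) :=
  isRightSingular_mul fun u hsu => hz (s * u) hsu

theorem mul_eq_zero_of_mem_span_singleton {w : R} (hw : ∀ t, w * t * w = 0) {a b : R}
    (ha : a ∈ TwoSidedIdeal.span {w}) (hb : b ∈ TwoSidedIdeal.span {w}) : a * b = 0 := by
  have hleft : ∀ a ∈ TwoSidedIdeal.span {w}, ∀ r, a * r * w = 0 := fun a ha => by
    induction ha using TwoSidedIdeal.span_induction with
    | mem x hx => rw [Set.mem_singleton_iff.1 hx]; exact hw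
    | zero => simp
    | add x y _ _ hx hy => intro r; simp [add_mul, hx r, hy r]
    | neg x _ hx => intro r; simp [hx r]
    | left_absorb c x _ hx => intro r; simp [mul_assoc, hx r]
    | right_absorb c x _ hx => intro r; simpa [mul_assoc] using hx (c * r)
  induction hb using TwoSidedIdeal.span_induction generalizing a with
  | mem x hx => simpa [Set.mem_singleton_iff.1 hx] using hleft a ha 1
  | zero => simp
  | add x y _ _ hx hy => simp [mul_add, hx ha, hy ha]
  | neg x _ hx => simp [hx ha]
  | left_absorb c x _ hx =>
    rw [← mul_assoc]; exact hx (TwoSidedIdeal.mul_mem_right _ _ _ ha)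
  | right_absorb c x _ hx => rw [← mul_assoc, hx ha, zero_mul]

theorem exists_mul_mul_ne_zero (hR : ∀ K : TwoSidedIdeal R, SetNilpotent (K : Set R) → K = ⊥)
    {w : R} (hw : w ≠ 0) : ∃ t, w * t * w ≠ 0 := by
  by_contra! h
  have hsq : SetNilpotent (TwoSidedIdeal.span {w} : Set R) := by
    refine ⟨2, two_pos, fun l hl hmem => ?_⟩
    obtain ⟨a, b, rfl⟩ := List.length_eq_two.1 hl
    simpa using mul_eq_zero_of_mem_span_singleton h (hmem a (by simp)) (hmem b (by simp))
  have := hR _ hsq ▸ TwoSidedIdeal.subset_span (Set.mem_singleton w)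
  exact hw (by simpa using this)

theorem eq_zero_of_isRightSingular {α : Ordinal.{0}} (hdev : DevLE α (Ideal Rᵐᵒᵖ))
    (hR : ∀ w : R, w ≠ 0 → ∃ t, w * t * w ≠ 0) {z : R} (hz : IsRightSingular z) : z = 0 := by
  by_contra hz0
  obtain ⟨C, hCz, hC, hcrit⟩ :=
    hdev.exists_critical_le (a := Submodule.span Rᵐᵒᵖ {op z}) (by simpa using hz0)
  obtain ⟨x, hxC, hx0⟩ := Submodule.exists_mem_ne_zero_of_ne_bot hC
  obtain ⟨d, rfl⟩ := mem_span_op_singleton.1 (hCz hxC)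
  set w := z * d
  obtain ⟨t, hwtw⟩ := hR w (by simpa using hx0)
  set W := Submodule.span Rᵐᵒᵖ {op w}
  set μ := LinearMap.toSpanSingleton Rᵐᵒᵖ Rᵐᵒᵖ (op (w * t))
  have hμ : ∀ r : R, μ (op r) = op (w * t * r) := fun r => rfl
  have hWC : W ≤ C := (Submodule.span_singleton_le_iff_mem _ _).2 hxC
  have hN : ⊥ < W ⊓ LinearMap.ker μ := by
    obtain ⟨e, he, hwte⟩ := (hz.mul_right d).mul_right t w (by simpa using hx0)
    exact bot_lt_iff_ne_bot.2 <| (Submodule.ne_bot_iff _).2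
      ⟨op (w * e), ⟨mem_span_op_singleton.2 ⟨e, rfl⟩, (hμ _).trans (congrArg op hwte)⟩,
        by rwa [Ne, op_eq_zero_iff]⟩
  have hNW : W ⊓ LinearMap.ker μ < W := inf_lt_left.2 fun hW =>
    hwtw <| op_eq_zero_iff _ |>.1 <|
      (hμ w).symm.trans (hW (Submodule.mem_span_singleton_self _))
  have hV : W.map μ ≠ ⊥ := (Submodule.ne_bot_iff _).2
    ⟨μ (op w), Submodule.mem_map_of_mem (Submodule.mem_span_singleton_self _), by
      rwa [hμ, Ne, op_eq_zero_iff]⟩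
  have hVW : W.map μ ≤ W := Submodule.map_le_iff_le_comap.2 fun y hy => by
    obtain ⟨e, rfl⟩ := mem_span_op_singleton.1 hy
    exact mem_span_op_singleton.2 ⟨t * w * e, by rw [hμ]; simp only [mul_assoc]⟩
  have hcrit' := hcrit _ (hVW.trans (hWC.trans hCz)) hV _ hN (hNW.trans_le hWC)
  exact ((hdev.devLE_Icc _ _).deviation_le_of_orderEmbedding (μ.comapInfEmbedding W)).trans
    (hdev.deviation_Icc_mono le_rfl hWC) |>.not_gt hcrit'

theorem exists_isRightSingular_of_rightAnn_lt {X : Set R} {K : Ideal Rᵐᵒᵖ}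
    (hlt : rightAnn R X < K)
    (hess : ∀ k : R, op k ∈ K → k ≠ 0 → ∃ d, op (k * d) ∈ rightAnn R X ∧ k * d ≠ 0) :
    ∃ z : R, z ≠ 0 ∧ IsRightSingular z := by
  obtain ⟨a, haK, ha⟩ := SetLike.exists_of_lt hlt
  obtain ⟨x, hxX, hxa⟩ : ∃ x ∈ X, x * a.unop ≠ 0 := by
    by_contra! h
    exact ha h
  refine ⟨x * a.unop, hxa, isRightSingular_mul fun u hau => ?_⟩
  obtain ⟨d, hdX, hd⟩ := hess (a.unop * u) (K.mul_mem_left (op u) haK) hau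
  exact ⟨d, hd, hdX x hxX⟩

theorem not_strictMono_rightAnn
    (hdim : ¬ ∃ f : ℕ → Ideal Rᵐᵒᵖ, (∀ n, f n ≠ ⊥) ∧ iSupIndep f)
    (hZ : ∀ z : R, IsRightSingular z → z = 0) (g : ℕ → Ideal Rᵐᵒᵖ)
    (hg : ∀ n, ∃ X : Set R, g n = rightAnn R X) : ¬ StrictMono g := by
  intro hmono
  by_cases hnotEss :
      ∀ m, ∃ k : R, op k ∈ g (m + 1) ∧ k ≠ 0 ∧ ∀ d, op (k * d) ∈ g m → k * d = 0
  · choose k hkg hk0 hkd using hnotEss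
    refine hdim ⟨fun m => Submodule.span Rᵐᵒᵖ {op (k m)}, fun m => by simpa using hk0 m, ?_⟩
    exact iSupIndep_of_disjoint_of_le_succ hmono.monotone
      (fun m => (Submodule.span_singleton_le_iff_mem _ _).2 (hkg m))
      fun m => disjoint_span_op_singleton_iff.2 (hkd m)
  · push Not at hnotEss
    obtain ⟨m, hm⟩ := hnotEss
    obtain ⟨X, hX⟩ := hg m
    rw [hX] at hm
    obtain ⟨z, hz0, hz⟩ := exists_isRightSingular_of_rightAnn_lt (hX ▸ hmono m.lt_succ_self) hm
    exact hz0 (hZ z hz)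

theorem isRightGoldie_of_devLE {α : Ordinal.{0}} (hdev : DevLE α (Ideal Rᵐᵒᵖ))
    (hR : ∀ K : TwoSidedIdeal R, SetNilpotent (K : Set R) → K = ⊥) : IsRightGoldie R := by
  have hdim : ¬ ∃ f : ℕ → Ideal Rᵐᵒᵖ, (∀ n, f n ≠ ⊥) ∧ iSupIndep f :=
    fun ⟨_, hne, hf⟩ => hdev.not_iSupIndep hne hf
  have hZ : ∀ z : R, IsRightSingular z → z = 0 := fun _ hz =>
    eq_zero_of_isRightSingular hdev (fun _ hw => exists_mul_mul_ne_zero hR hw) hz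
  exact ⟨hdim, exists_forall_eq_of_not_strictMono (p := fun J => ∃ X, J = rightAnn R X)
    (not_strictMono_rightAnn hdim hZ)⟩

end Ring

theorem HasRightKrullDim.of_surjective {A B : Type} [Ring A] [Ring B] (h : HasRightKrullDim A)
    (f : A →+* B) (hf : Function.Surjective f) : HasRightKrullDim B := by
  obtain ⟨α, hα⟩ := h
  have hf' : Function.Surjective (RingHom.op f) := fun y => by
    obtain ⟨x, hx⟩ := hf y.unop
    exact ⟨op x, congrArg op hx⟩
  exact ⟨α, hα.of_orderEmbedding (Ideal.orderEmbeddingOfSurjective _ hf')⟩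

/-- If `A` has right Krull dimension, then every semiprime quotient `A/I` (i.e. `A/I` has
no nonzero nilpotent ideals) is a right Goldie ring. -/
theorem semiprime_quotient_goldie_of_hasRightKrullDim {A : Type} [Ring A]
    (hK : HasRightKrullDim A) (I : TwoSidedIdeal A)
    (hsemiprime : ∀ K : TwoSidedIdeal I.ringCon.Quotient,
      SetNilpotent (K : Set I.ringCon.Quotient) → K = ⊥) :
    IsRightGoldie I.ringCon.Quotient := by
  obtain ⟨α, hα⟩ := hK.of_surjective I.ringCon.mk' I.ringCon.mk'_surjective
  exact isRightGoldie_of_devLE hα hsemiprime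
end

section
/- (Jacobson) If A is a (left and right) artinian ring and B is a nil weakly closed subset of A, then the subring of A generated by B is nilpotent. -/
open Set MulOpposite

section

variable {A : Type*} [Ring A]

def IsWeaklyClosed (C : Set A) : Prop :=
  ∀ a ∈ C, ∀ b ∈ C, ∃ γ ∈ Set.center A, a * b + γ * (b * a) ∈ C

def MulStable (C N : Set A) : Prop :=
  ∀ c ∈ C, MapsTo (c * ·) N N

def ActsNilpotently (C N P : Set A) : Prop :=
  ∃ k, ∀ l : List A, k ≤ l.length → (∀ x ∈ l, x ∈ C) → MapsTo (l.prod * ·) N P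

def stabilizing (C Q : Set A) : Set A :=
  {c ∈ C | MapsTo (c * ·) Q Q}

theorem MulStable.mono {C S N : Set A} (h : MulStable C N) (hS : S ⊆ C) : MulStable S N :=
  fun c hc => h c (hS hc)

theorem MulStable.mapsTo_prod {C N : Set A} (h : MulStable C N) :
    ∀ {l : List A}, (∀ x ∈ l, x ∈ C) → MapsTo (l.prod * ·) N N
  | [], _ => fun n hn => by simpa using hn
  | c :: l, hl => fun n hn => by
    dsimp only
    rw [List.prod_cons, mul_assoc]
    exact h c (hl c List.mem_cons_self)
      (h.mapsTo_prod (fun x hx => hl x (List.mem_cons_of_mem c hx)) hn)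

theorem ActsNilpotently.trans {C N Q P : Set A} (hQP : ActsNilpotently C Q P)
    (hNQ : ActsNilpotently C N Q) : ActsNilpotently C N P := by
  obtain ⟨k₁, h₁⟩ := hQP
  obtain ⟨k₂, h₂⟩ := hNQ
  refine ⟨k₁ + k₂, fun l hl hC n hn => ?_⟩
  dsimp only
  rw [← List.take_append_drop k₁ l, List.prod_append, mul_assoc]
  exact h₁ _ (by simp; omega) (fun x hx => hC x (List.mem_of_mem_take hx))
    (h₂ _ (by simp; omega) (fun x hx => hC x (List.mem_of_mem_drop hx)) hn)

theorem actsNilpotently_of_forall_mapsTo {C N P : Set A} (hN : MulStable C N)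
    (h : ∀ c ∈ C, MapsTo (c * ·) N P) : ActsNilpotently C N P := by
  refine ⟨1, fun l hl hC n hn => ?_⟩
  obtain _ | ⟨c, l⟩ := l
  · simp at hl
  dsimp only
  rw [List.prod_cons, mul_assoc]
  exact h c (hC c List.mem_cons_self)
    (hN.mapsTo_prod (fun x hx => hC x (List.mem_cons_of_mem c hx)) hn)

theorem actsNilpotently_singleton {a : A} (ha : IsNilpotent a) (N : Set A) {P : Set A}
    (hP : (0 : A) ∈ P) : ActsNilpotently {a} N P := by
  obtain ⟨ν, hν⟩ := ha
  refine ⟨ν, fun l hl hC n _ => ?_⟩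
  rw [List.eq_replicate_iff.2 ⟨rfl, hC⟩, List.prod_replicate, ← Nat.sub_add_cancel hl, pow_add,
    hν, mul_zero]
  simpa using hP

-- A longest word not mapping `N` into `P` produces the required element.
theorem ActsNilpotently.exists_forall_mul_mem {C N P : Set A} (h : ActsNilpotently C N P)
    (hN : MulStable C N) (hNP : ¬ N ⊆ P) : ∃ x ∈ N, x ∉ P ∧ ∀ c ∈ C, c * x ∈ P := by
  classical
  obtain ⟨k, hk⟩ : ∃ k, Nat.find h = k + 1 := Nat.exists_eq_succ_of_ne_zero fun h0 =>
    hNP fun n hn => by simpa using Nat.find_spec h [] (by omega) (by simp) hn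
  have hmin := Nat.find_min h (show k < Nat.find h by omega)
  simp only [MapsTo, not_forall] at hmin
  obtain ⟨l, hl, hC, n, hn, hlP⟩ := hmin
  refine ⟨l.prod * n, hN.mapsTo_prod hC hn, hlP, fun c hc => ?_⟩
  have := Nat.find_spec h (c :: l) (by simp; omega)
    (fun x hx => (List.mem_cons.1 hx).elim (· ▸ hc) (hC x)) hn
  dsimp only at this
  rwa [List.prod_cons, mul_assoc] at this

theorem IsNilpotent.exists_mul_mem {a : A} (ha : IsNilpotent a) {N P : Set A}
    (hN : MapsTo (a * ·) N N) (hP : (0 : A) ∈ P) (hNP : ¬ N ⊆ P) :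
    ∃ x ∈ N, x ∉ P ∧ a * x ∈ P := by
  obtain ⟨x, hxN, hxP, hx⟩ := (actsNilpotently_singleton ha N hP).exists_forall_mul_mem
    (by simpa [MulStable] using hN) hNP
  exact ⟨x, hxN, hxP, hx a rfl⟩

def SandwichMapsTo (S : Set A) (d : ℕ) (x : A) (N P : Set A) : Prop :=
  ∀ w₁ w₂ : List A, (∀ y ∈ w₁, y ∈ S) → (∀ y ∈ w₂, y ∈ S) → d ≤ w₁.length + w₂.length →
    MapsTo (fun n => w₁.prod * (x * (w₂.prod * n))) N P

theorem SandwichMapsTo.mono {S N P : Set A} {d d' : ℕ} {x : A} (h : SandwichMapsTo S d x N P)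
    (hd : d ≤ d') : SandwichMapsTo S d' x N P :=
  fun w₁ w₂ h₁ h₂ hw => h w₁ w₂ h₁ h₂ (hd.trans hw)

theorem SandwichMapsTo.mapsTo {S N P : Set A} {x : A} (h : SandwichMapsTo S 0 x N P) :
    MapsTo (x * ·) N P :=
  fun n hn => by simpa using h [] [] (by simp) (by simp) le_rfl hn

-- In a sandwich of total length `2 * m`, one of the two words has length at least `m`.
theorem sandwichMapsTo_two_mul {S N P : Set A} {m : ℕ} {x : A}
    (hm : ∀ l : List A, m ≤ l.length → (∀ y ∈ l, y ∈ S) → MapsTo (l.prod * ·) N P)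
    (hSN : MulStable S N) (hSP : MulStable S P) (hxN : MapsTo (x * ·) N N)
    (hxP : MapsTo (x * ·) P P) : SandwichMapsTo S (2 * m) x N P := by
  intro w₁ w₂ h₁ h₂ hw n hn
  by_cases hw₂ : m ≤ w₂.length
  · exact hSP.mapsTo_prod h₁ (hxP (hm w₂ hw₂ h₂ hn))
  · exact hm w₁ (by omega) h₁ (hxN (hSN.mapsTo_prod h₂ hn))

theorem Submodule.mul_mem_right_of_op (P : Submodule Aᵐᵒᵖ A) {p : A} (hp : p ∈ P) (a : A) :
    p * a ∈ P := by
  simpa using P.smul_mem (op a) hp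

theorem Submodule.center_mul_mem (P : Submodule Aᵐᵒᵖ A) {γ p : A} (hγ : γ ∈ Set.center A)
    (hp : p ∈ P) : γ * p ∈ P := by
  rw [← Semigroup.mem_center_iff.1 hγ p]
  exact P.mul_mem_right_of_op hp γ

theorem SandwichMapsTo.add_center_mul {S N : Set A} {P : Submodule Aᵐᵒᵖ A} {d : ℕ}
    {x b γ : A} (h : SandwichMapsTo S (d + 1) x N P) (hb : b ∈ S) (hγ : γ ∈ Set.center A) :
    SandwichMapsTo S d (b * x + γ * (x * b)) N P := by
  intro w₁ w₂ h₁ h₂ hw n hn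
  have hw₁b : ∀ y ∈ w₁ ++ [b], y ∈ S := by simpa [or_imp, forall_and] using ⟨h₁, hb⟩
  have hbw₂ : ∀ y ∈ b :: w₂, y ∈ S := by simpa [or_imp, forall_and] using ⟨hb, h₂⟩
  have key : w₁.prod * ((b * x + γ * (x * b)) * (w₂.prod * n)) =
      (w₁ ++ [b]).prod * (x * (w₂.prod * n)) + γ * (w₁.prod * (x * ((b :: w₂).prod * n))) := by
    rw [List.prod_append, List.prod_singleton, List.prod_cons, ← mul_assoc γ w₁.prod,
      ← Semigroup.mem_center_iff.1 hγ w₁.prod]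
    noncomm_ring
  dsimp only
  rw [key]
  exact P.add_mem (h _ _ hw₁b h₂ (by simp; omega) hn)
    (P.center_mul_mem hγ (h _ _ h₁ hbw₂ (by simp; omega) hn))

theorem isWeaklyClosed_stabilizing {C : Set A} (hC : IsWeaklyClosed C) (Q : Submodule Aᵐᵒᵖ A) :
    IsWeaklyClosed (stabilizing C Q) := by
  intro a ha b hb
  obtain ⟨γ, hγ, habC⟩ := hC a ha.1 b hb.1
  refine ⟨γ, hγ, habC, fun q hq => ?_⟩
  have : (a * b + γ * (b * a)) * q = a * (b * q) + γ * (b * (a * q)) := by noncomm_ring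
  dsimp only
  rw [this]
  exact Q.add_mem (ha.2 (hb.2 hq)) (Q.center_mul_mem hγ (hb.2 (ha.2 hq)))

def killedBy (S : Set A) (N P : Submodule Aᵐᵒᵖ A) : Submodule Aᵐᵒᵖ A :=
  N ⊓ ⨅ c ∈ S, P.comap (RingEquiv.moduleEndSelfOp A c)

theorem mem_killedBy {S : Set A} {N P : Submodule Aᵐᵒᵖ A} {x : A} :
    x ∈ killedBy S N P ↔ x ∈ N ∧ ∀ c ∈ S, c * x ∈ P := by
  simp [killedBy]

theorem lt_killedBy {S : Set A} {N P : Submodule Aᵐᵒᵖ A} (h : ActsNilpotently S N P)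
    (hSN : MulStable S N) (hSP : MulStable S P) (hPN : P < N) : P < killedBy S N P := by
  obtain ⟨x, hxN, hxP, hx⟩ := h.exists_forall_mul_mem hSN (fun h => hPN.not_ge h)
  exact SetLike.lt_iff_le_and_exists.2
    ⟨fun p hp => mem_killedBy.2 ⟨hPN.le hp, fun c hc => hSP c hc hp⟩, x,
      mem_killedBy.2 ⟨hxN, hx⟩, hxP⟩

theorem killedBy_anti {S T : Set A} (hST : S ⊆ T) (N P : Submodule Aᵐᵒᵖ A) :
    killedBy T N P ≤ killedBy S N P := fun _ hx =>
  mem_killedBy.2 ⟨(mem_killedBy.1 hx).1, fun c hc => (mem_killedBy.1 hx).2 c (hST hc)⟩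

theorem mapsTo_of_forall_not_lt {b : A} (hb : IsNilpotent b) {P N : Submodule Aᵐᵒᵖ A}
    (hPN : P ≤ N) (hN : MapsTo (b * ·) N N) (hP : MapsTo (b * ·) P P)
    (hmid : ∀ Q, P < Q → ¬ Q < N) : MapsTo (b * ·) N P := by
  by_cases hNP : (N : Set A) ⊆ P
  · exact fun n hn => hP (hNP hn)
  obtain ⟨x, hxN, hxP, hbx⟩ := hb.exists_mul_mem hN P.zero_mem hNP
  let Q := N ⊓ P.comap (RingEquiv.moduleEndSelfOp A b)
  have mem_Q : ∀ y, y ∈ Q ↔ y ∈ N ∧ b * y ∈ P := by simp [Q]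
  have hPQ : P < Q := SetLike.lt_iff_le_and_exists.2
    ⟨fun p hp => (mem_Q p).2 ⟨hPN hp, hP hp⟩, x, (mem_Q x).2 ⟨hxN, hbx⟩, hxP⟩
  have hQN : Q = N := inf_le_left.eq_of_not_lt (hmid Q hPQ)
  exact fun n hn => ((mem_Q n).1 (hQN.ge hn)).2

theorem IsWeaklyClosed.mapsTo_killedBy {C S : Set A} (hwc : IsWeaklyClosed C) (hSC : S ⊆ C)
    {N P : Submodule Aᵐᵒᵖ A} (hN : MulStable C N) (hP : MulStable C P) {a : A} (ha : a ∈ C)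
    (hmax : ∀ b ∈ S, ∀ γ ∈ Set.center A, b * a + γ * (a * b) ∈ C →
      MapsTo ((b * a + γ * (a * b)) * ·) (killedBy S N P) P) :
    MapsTo (a * ·) (killedBy S N P) (killedBy S N P) := by
  intro n hn
  obtain ⟨hnN, hnS⟩ := mem_killedBy.1 hn
  refine mem_killedBy.2 ⟨hN a ha hnN, fun b hb => ?_⟩
  obtain ⟨γ, hγ, hbaC⟩ := hwc b (hSC hb) a ha
  have : b * (a * n) = (b * a + γ * (a * b)) * n - γ * (a * (b * n)) := by noncomm_ring
  rw [this]
  exact P.sub_mem (hmax b hb γ hγ hbaC hn) (P.center_mul_mem hγ (hP a ha (hnS b hb)))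

theorem IsWeaklyClosed.exists_killedBy_lt {C S : Set A} (hwc : IsWeaklyClosed C)
    (hnil : ∀ c ∈ C, IsNilpotent c) (hSC : S ⊆ C) {N P : Submodule Aᵐᵒᵖ A}
    (hN : MulStable C N) (hP : MulStable C P) (hPK : P < killedBy S N P) {a : A} (ha : a ∈ C)
    (haK : ¬ MapsTo (a * ·) (killedBy S N P) P)
    (hmax : ∀ b ∈ S, ∀ γ ∈ Set.center A, b * a + γ * (a * b) ∈ C →
      MapsTo ((b * a + γ * (a * b)) * ·) (killedBy S N P) P) :
    ∃ Q, P < Q ∧ Q < N ∧ killedBy (stabilizing C Q) N P < killedBy S N P := by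
  set K := killedBy S N P
  have haKK : MapsTo (a * ·) K K := hwc.mapsTo_killedBy hSC hN hP ha hmax
  obtain ⟨x, hxK, hxP, hax⟩ := (hnil a ha).exists_mul_mem haKK P.zero_mem (fun h => hPK.not_ge h)
  simp only [MapsTo, not_forall] at haK
  obtain ⟨n, hnK, hanP⟩ := haK
  let Q := K ⊓ P.comap (RingEquiv.moduleEndSelfOp A a)
  have mem_Q : ∀ y, y ∈ Q ↔ y ∈ K ∧ a * y ∈ P := by simp [Q]
  have hPQ : P < Q := SetLike.lt_iff_le_and_exists.2
    ⟨fun p hp => (mem_Q p).2 ⟨hPK.le hp, hP a ha hp⟩, x, (mem_Q x).2 ⟨hxK, hax⟩, hxP⟩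
  have hQK : Q < K := SetLike.lt_iff_le_and_exists.2
    ⟨inf_le_left, n, hnK, fun h => hanP ((mem_Q n).1 h).2⟩
  have hSQ : S ⊆ stabilizing C Q := fun b hb =>
    ⟨hSC hb, fun y hy => hPQ.le ((mem_killedBy.1 ((mem_Q y).1 hy).1).2 b hb)⟩
  have haQ : a ∈ stabilizing C Q := ⟨ha, fun y hy =>
    (mem_Q _).2 ⟨haKK ((mem_Q y).1 hy).1, hP a ha ((mem_Q y).1 hy).2⟩⟩
  refine ⟨Q, hPQ, hQK.trans_le inf_le_left, SetLike.lt_iff_le_and_exists.2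
    ⟨killedBy_anti hSQ N P, n, hnK, fun h => hanP ((mem_killedBy.1 h).2 a haQ)⟩⟩

-- Otherwise `x ↦ b * x + γ * (x * b)` can be iterated inside `D` starting from `a₀`, and after
-- `2 * m` steps the sandwich depth forces the result to map `N` into `P`.
theorem exists_forall_add_center_mul_not_mem {S D : Set A} {N P : Submodule Aᵐᵒᵖ A}
    (hS : ActsNilpotently S N P) (hSN : MulStable S N) (hSP : MulStable S P) {a₀ : A}
    (ha₀ : a₀ ∈ D) (ha₀N : MapsTo (a₀ * ·) N N) (ha₀P : MapsTo (a₀ * ·) P P)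
    (hD : ∀ x ∈ D, ¬ MapsTo (x * ·) N P) :
    ∃ a ∈ D, ∀ b ∈ S, ∀ γ ∈ Set.center A, b * a + γ * (a * b) ∉ D := by
  by_contra! hstep
  obtain ⟨m, hm⟩ := hS
  have hiter : ∀ t, ∃ x ∈ D, SandwichMapsTo S (2 * m - t) x N P := by
    intro t
    induction t with
    | zero => exact ⟨a₀, ha₀, sandwichMapsTo_two_mul hm hSN hSP ha₀N ha₀P⟩
    | succ t ih =>
      obtain ⟨x, hx, hxS⟩ := ih
      obtain ⟨b, hb, γ, hγ, hy⟩ := hstep x hx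
      exact ⟨_, hy, (hxS.mono (d' := 2 * m - (t + 1) + 1) (by omega)).add_center_mul hb hγ⟩
  obtain ⟨x, hx, hxS⟩ := hiter (2 * m)
  rw [Nat.sub_self] at hxS
  exact hD x hx hxS.mapsTo

theorem mapsTo_of_forall_not_mulStable [IsArtinian Aᵐᵒᵖ A] {C : Set A}
    (hwc : IsWeaklyClosed C) (hnil : ∀ c ∈ C, IsNilpotent c) {P N : Submodule Aᵐᵒᵖ A}
    (hPN : P ≤ N) (hN : MulStable C N) (hP : MulStable C P)
    (hirr : ∀ Q, P < Q → Q < N → ¬ MulStable C Q)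
    (hQ : ∀ Q, P < Q → Q < N → ActsNilpotently (stabilizing C Q) N P) :
    ∀ c ∈ C, MapsTo (c * ·) N P := by
  by_cases hmid : ∃ Q, P < Q ∧ Q < N
  swap
  · push Not at hmid
    exact fun c hc => mapsTo_of_forall_not_lt (hnil c hc) hPN (hN c hc) (hP c hc) hmid
  obtain ⟨Q₀, hPQ₀, hQ₀N⟩ := hmid
  obtain ⟨_, ⟨Q, hPQ, hQN, rfl⟩, hmin⟩ := IsArtinian.set_has_minimal
    {K | ∃ Q, P < Q ∧ Q < N ∧ K = killedBy (stabilizing C Q) N P} ⟨_, Q₀, hPQ₀, hQ₀N, rfl⟩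
  set S := stabilizing C Q
  set K := killedBy S N P
  have hSC : S ⊆ C := sep_subset _ _
  have hPK : P < K := lt_killedBy (hQ Q hPQ hQN) (hN.mono hSC) (hP.mono hSC) (hPQ.trans hQN)
  by_cases hD : ∀ a ∈ C, MapsTo (a * ·) K P
  · have hKN : K = N := inf_le_left.eq_of_not_lt fun hKN =>
      hirr K hPK hKN fun a ha => (hD a ha).mono_right hPK.le
    rwa [hKN] at hD
  push Not at hD
  obtain ⟨a₀, ha₀, ha₀K⟩ := hD
  obtain ⟨a, ⟨ha, haK⟩, hmax⟩ := exists_forall_add_center_mul_not_mem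
    (D := {a ∈ C | ¬ MapsTo (a * ·) K P}) (hQ Q hPQ hQN) (hN.mono hSC) (hP.mono hSC)
    ⟨ha₀, ha₀K⟩ (hN a₀ ha₀) (hP a₀ ha₀)
    fun x hx hxN => hx.2 (hxN.mono_left fun y hy => (mem_killedBy.1 hy).1)
  obtain ⟨Q', hPQ', hQ'N, hlt⟩ := hwc.exists_killedBy_lt hnil hSC hN hP hPK ha haK
    fun b hb γ hγ hbC => not_not.1 fun h => hmax b hb γ hγ ⟨hbC, h⟩
  exact (hmin _ ⟨Q', hPQ', hQ'N, rfl⟩ hlt).elim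

theorem actsNilpotently_of_isWeaklyClosed [IsArtinian Aᵐᵒᵖ A] [IsNoetherian Aᵐᵒᵖ A]
    {C : Set A} (hwc : IsWeaklyClosed C) (hnil : ∀ c ∈ C, IsNilpotent c)
    {P N : Submodule Aᵐᵒᵖ A} (hPN : P ≤ N) (hN : MulStable C N) (hP : MulStable C P) :
    ActsNilpotently C N P := by
  induction N using WellFoundedLT.induction generalizing P C with | ind N IHN => ?_
  induction P using WellFoundedGT.induction generalizing C with | ind P IHP => ?_
  by_cases hstab : ∃ Q, P < Q ∧ Q < N ∧ MulStable C Q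
  · obtain ⟨Q, hPQ, hQN, hQ⟩ := hstab
    exact (IHN Q hQN hwc hnil hPQ.le hQ hP).trans (IHP Q hPQ hwc hnil hQN.le hN hQ)
  push Not at hstab
  refine actsNilpotently_of_forall_mapsTo hN
    (mapsTo_of_forall_not_mulStable hwc hnil hPN hN hP hstab fun Q hPQ hQN => ?_)
  have hSC : stabilizing C Q ⊆ C := sep_subset _ _
  have hSQ : MulStable (stabilizing C Q) Q := fun c hc => hc.2
  have hSnil : ∀ c ∈ stabilizing C Q, IsNilpotent c := fun c hc => hnil c hc.1
  exact (IHN Q hQN (isWeaklyClosed_stabilizing hwc Q) hSnil hPQ.le hSQ (hP.mono hSC)).trans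
    (IHP Q hPQ (isWeaklyClosed_stabilizing hwc Q) hSnil hQN.le (hN.mono hSC) hSQ)

end

theorem jacobson_nil_weaklyClosed_nilpotent_general {A : Type} [Ring A]
    (hartr : IsArtinianRing Aᵐᵒᵖ)
    (B : Set A)
    (hwc : ∀ a ∈ B, ∀ b ∈ B, ∃ γ ∈ Set.center A, a * b + γ * (b * a) ∈ B)
    (hnil : ∀ a ∈ B, IsNilpotent a) :
    SetNilpotent B := by
  have : IsArtinian Aᵐᵒᵖ A := isArtinian_of_linearEquiv (opLinearEquiv Aᵐᵒᵖ).symm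
  have : IsNoetherian Aᵐᵒᵖ A := isNoetherian_of_linearEquiv (opLinearEquiv Aᵐᵒᵖ).symm
  obtain ⟨k, hk⟩ := actsNilpotently_of_isWeaklyClosed (C := B) hwc hnil bot_le
    (fun _ _ _ _ => Submodule.mem_top) (fun _ _ x hx => by simp_all)
  refine ⟨k + 1, k.succ_pos, fun l hl hB => ?_⟩
  simpa using hk l (by omega) hB (Submodule.mem_top (x := 1))

/-- (Jacobson) If `A` is a (left and right) artinian ring and `B` is a nil weakly closed
subset of `A`, then the subring of `A` generated by `B` is nilpotent (products of some
fixed length of elements of `B` are zero). -/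
theorem jacobson_nil_weaklyClosed_nilpotent {A : Type} [Ring A]
    (hartl : IsArtinianRing A) (hartr : IsArtinianRing Aᵐᵒᵖ)
    (B : Set A)
    (hwc : ∀ a ∈ B, ∀ b ∈ B, ∃ γ ∈ Set.center A, a * b + γ * (b * a) ∈ B)
    (hnil : ∀ a ∈ B, IsNilpotent a) :
    SetNilpotent B :=
  jacobson_nil_weaklyClosed_nilpotent_general hartr B hwc hnil
end
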